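/- arXiv:2507.07028 — 13 statements merged into one kernel-verified Lean document; each statement's English description precedes it below -/
import Mathlib

section
/- Let m and t be naturals with 1 ≤ t < m, and let N be an m × m real orthogonal matrix (N·Nᵀ = I) written in block form N = [[U, V], [W, D]], where U is t × t, V is t × (m−t), W is (m−t) × t, and D is (m−t) × (m−t). If the matrix I + U is invertible, then Y₁ = D − W·(I + U)⁻¹·V is an orthogonal matrix of order m − t, i.e., Y₁·Y₁ᵀ = I. -/
/-!
With `E` a left inverse of `1 + U` and `Y = D - W E V`, the block relations of `N Nᵀ = 1`
reduce `Y Yᵀ` to `1 + W (E (1 - U Uᵀ) Eᵀ + E U + Uᵀ Eᵀ - 1) Wᵀ`, and the bracket vanishes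
because `E U = 1 - E`.
-/

open Matrix

variable {l n R : Type*} [Fintype l] [Fintype n] [DecidableEq l] [DecidableEq n] [CommRing R]

theorem mul_one_sub_mul_transpose_mul_transpose_add_eq_one
    {U E : Matrix l l R} (hE : E * (1 + U) = 1) :
    E * (1 - U * Uᵀ) * Eᵀ + E * U + Uᵀ * Eᵀ = 1 := by
  have hEU : E * U = 1 - E := by rw [eq_sub_iff_add_eq, ← hE]; noncomm_ring
  have hUE : Uᵀ * Eᵀ = 1 - Eᵀ := by rw [← transpose_mul, hEU]; simp
  calc E * (1 - U * Uᵀ) * Eᵀ + E * U + Uᵀ * Eᵀ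
      = E * Eᵀ - (E * U) * (Uᵀ * Eᵀ) + E * U + Uᵀ * Eᵀ := by noncomm_ring
    _ = 1 := by rw [hEU, hUE]; noncomm_ring

theorem mul_transpose_eq_one_of_fromBlocks_mul_transpose_eq_one
    {U : Matrix l l R} {V : Matrix l n R} {W : Matrix n l R} {D : Matrix n n R}
    (hN : fromBlocks U V W D * (fromBlocks U V W D)ᵀ = 1) {E : Matrix l l R}
    (hE : E * (1 + U) = 1) :
    (D - W * E * V) * (D - W * E * V)ᵀ = 1 := by
  rw [fromBlocks_transpose, fromBlocks_multiply, ← fromBlocks_one] at hN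
  obtain ⟨hUU, hUW, hWU, hWW⟩ := fromBlocks_inj.mp hN
  have hVV : V * Vᵀ = 1 - U * Uᵀ := eq_sub_of_add_eq' hUU
  have hVD : V * Dᵀ = -(U * Wᵀ) := eq_neg_of_add_eq_zero_right hUW
  have hDV : D * Vᵀ = -(W * Uᵀ) := eq_neg_of_add_eq_zero_right hWU
  have hDD : D * Dᵀ = 1 - W * Wᵀ := eq_sub_of_add_eq' hWW
  calc (D - W * E * V) * (D - W * E * V)ᵀ
      = D * Dᵀ - W * E * (V * Dᵀ) - (D * Vᵀ) * Eᵀ * Wᵀ + W * E * (V * Vᵀ) * Eᵀ * Wᵀ := by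
        simp only [transpose_sub, transpose_mul, Matrix.mul_sub, Matrix.sub_mul, Matrix.mul_assoc]
        abel
    _ = 1 + W * (E * (1 - U * Uᵀ) * Eᵀ + E * U + Uᵀ * Eᵀ - 1) * Wᵀ := by
        rw [hVV, hVD, hDV, hDD]
        simp only [Matrix.mul_add, Matrix.add_mul, Matrix.mul_sub, Matrix.sub_mul, Matrix.mul_neg,
          Matrix.neg_mul, Matrix.mul_one, Matrix.mul_assoc]
        abel
    _ = 1 := by
        rw [mul_one_sub_mul_transpose_mul_transpose_add_eq_one hE]
        simp

theorem stmt_0_general (m t : ℕ)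
    (U : Matrix (Fin t) (Fin t) ℝ) (V : Matrix (Fin t) (Fin (m - t)) ℝ)
    (W : Matrix (Fin (m - t)) (Fin t) ℝ) (D : Matrix (Fin (m - t)) (Fin (m - t)) ℝ)
    (hN : Matrix.fromBlocks U V W D * (Matrix.fromBlocks U V W D)ᵀ = 1)
    (hU : IsUnit (1 + U)) :
    (D - W * (1 + U)⁻¹ * V) * (D - W * (1 + U)⁻¹ * V)ᵀ = 1 :=
  mul_transpose_eq_one_of_fromBlocks_mul_transpose_eq_one hN
    (nonsing_inv_mul _ ((isUnit_iff_isUnit_det _).mp hU))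

theorem stmt_0 (m t : ℕ) (ht : 1 ≤ t) (htm : t < m)
    (U : Matrix (Fin t) (Fin t) ℝ) (V : Matrix (Fin t) (Fin (m - t)) ℝ)
    (W : Matrix (Fin (m - t)) (Fin t) ℝ) (D : Matrix (Fin (m - t)) (Fin (m - t)) ℝ)
    (hN : Matrix.fromBlocks U V W D * (Matrix.fromBlocks U V W D)ᵀ = 1)
    (hU : IsUnit (1 + U)) :
    (D - W * (1 + U)⁻¹ * V) * (D - W * (1 + U)⁻¹ * V)ᵀ = 1 :=
  stmt_0_general m t U V W D hN hU
end

section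
/- Let m and t be naturals with 1 ≤ t < m, and let N be an m × m real orthogonal matrix (N·Nᵀ = I) written in block form N = [[U, V], [W, D]], where U is t × t, V is t × (m−t), W is (m−t) × t, and D is (m−t) × (m−t). If the matrix I − U is invertible, then Y₂ = D + W·(I − U)⁻¹·V is an orthogonal matrix of order m − t, i.e., Y₂·Y₂ᵀ = I. -/
/-!
Write `A` for a left inverse of `1 - U`. Since `1 - U Uᵀ = (1 - U) + (1 - Uᵀ) - (1 - U)(1 - Uᵀ)`,
one gets `A (1 - U Uᵀ) Aᵀ = A + Aᵀ - 1`, and `A U = A - 1`. Expanding `Y Yᵀ` for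
`Y = D + W A V` and substituting the block relations `V Vᵀ = 1 - U Uᵀ`, `V Dᵀ = -U Wᵀ`,
`D Dᵀ = 1 - W Wᵀ` of `N Nᵀ = 1`, every term but `1` cancels.
-/

open Matrix

namespace Matrix

variable {R : Type*} [CommRing R] {k l : Type*} [Fintype k] [Fintype l] [DecidableEq k]
  [DecidableEq l]

theorem fromBlocks_mul_transpose_self_eq_one_iff (U : Matrix k k R) (V : Matrix k l R)
    (W : Matrix l k R) (D : Matrix l l R) :
    fromBlocks U V W D * (fromBlocks U V W D)ᵀ = 1 ↔
      U * Uᵀ + V * Vᵀ = 1 ∧ U * Wᵀ + V * Dᵀ = 0 ∧ W * Uᵀ + D * Vᵀ = 0 ∧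
        W * Wᵀ + D * Dᵀ = 1 := by
  rw [fromBlocks_transpose, fromBlocks_multiply, ← fromBlocks_one, fromBlocks_inj]

theorem mul_one_sub_mul_transpose_eq {A U : Matrix k k R} (hA : A * (1 - U) = 1) :
    A * (1 - U * Uᵀ) * Aᵀ = A + Aᵀ - 1 := by
  have hAt : (1 - Uᵀ) * Aᵀ = 1 := by
    simpa only [transpose_mul, transpose_sub, transpose_one] using congrArg transpose hA
  have hsplit : 1 - U * Uᵀ = (1 - U) + (1 - Uᵀ) - (1 - U) * (1 - Uᵀ) := by noncomm_ring
  calc A * (1 - U * Uᵀ) * Aᵀ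
      = A * (1 - U) * Aᵀ + A * ((1 - Uᵀ) * Aᵀ) - A * (1 - U) * ((1 - Uᵀ) * Aᵀ) := by
        rw [hsplit]; noncomm_ring
    _ = A + Aᵀ - 1 := by rw [hA, hAt]; noncomm_ring

theorem mul_transpose_self_eq_one_of_fromBlocks {U : Matrix k k R} {V : Matrix k l R}
    {W : Matrix l k R} {D : Matrix l l R}
    (hN : fromBlocks U V W D * (fromBlocks U V W D)ᵀ = 1) {A : Matrix k k R}
    (hA : A * (1 - U) = 1) :
    (D + W * A * V) * (D + W * A * V)ᵀ = 1 := by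
  obtain ⟨hUV, hUW, -, hWD⟩ := (fromBlocks_mul_transpose_self_eq_one_iff U V W D).mp hN
  have hVV : V * Vᵀ = 1 - U * Uᵀ := eq_sub_of_add_eq' hUV
  have hVD : V * Dᵀ = -(U * Wᵀ) := eq_neg_of_add_eq_zero_right hUW
  have hDV : D * Vᵀ = -(W * Uᵀ) := by
    simpa only [transpose_mul, transpose_transpose, transpose_neg] using congrArg transpose hVD
  have hDD : D * Dᵀ = 1 - W * Wᵀ := eq_sub_of_add_eq' hWD
  have hAU : A * U = A - 1 := by rw [← hA]; noncomm_ring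
  have hUA : Uᵀ * Aᵀ = Aᵀ - 1 := by
    rw [← transpose_mul, hAU, transpose_sub, transpose_one]
  calc (D + W * A * V) * (D + W * A * V)ᵀ
      = D * Dᵀ + D * Vᵀ * (Aᵀ * Wᵀ) + W * A * (V * Dᵀ) + W * (A * (V * Vᵀ) * Aᵀ) * Wᵀ := by
        simp only [transpose_add, transpose_mul, Matrix.add_mul, Matrix.mul_add,
          Matrix.mul_assoc]
        abel
    _ = 1 - W * Wᵀ - W * (Uᵀ * Aᵀ) * Wᵀ - W * (A * U) * Wᵀ + W * (A + Aᵀ - 1) * Wᵀ := by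
        rw [hDD, hDV, hVD, hVV, mul_one_sub_mul_transpose_eq hA]
        simp only [Matrix.mul_neg, Matrix.neg_mul, Matrix.mul_assoc]
        abel
    _ = 1 := by
        rw [hAU, hUA]
        simp only [Matrix.sub_mul, Matrix.mul_sub, Matrix.add_mul, Matrix.mul_add,
          Matrix.mul_one]
        abel

end Matrix

theorem stmt_1_general (m t : ℕ)
    (U : Matrix (Fin t) (Fin t) ℝ) (V : Matrix (Fin t) (Fin (m - t)) ℝ)
    (W : Matrix (Fin (m - t)) (Fin t) ℝ) (D : Matrix (Fin (m - t)) (Fin (m - t)) ℝ)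
    (hN : Matrix.fromBlocks U V W D * (Matrix.fromBlocks U V W D)ᵀ = 1)
    (hU : IsUnit (1 - U)) :
    (D + W * (1 - U)⁻¹ * V) * (D + W * (1 - U)⁻¹ * V)ᵀ = 1 :=
  mul_transpose_self_eq_one_of_fromBlocks hN
    (nonsing_inv_mul _ ((isUnit_iff_isUnit_det _).mp hU))

theorem stmt_1 (m t : ℕ) (ht : 1 ≤ t) (htm : t < m)
    (U : Matrix (Fin t) (Fin t) ℝ) (V : Matrix (Fin t) (Fin (m - t)) ℝ)
    (W : Matrix (Fin (m - t)) (Fin t) ℝ) (D : Matrix (Fin (m - t)) (Fin (m - t)) ℝ)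
    (hN : Matrix.fromBlocks U V W D * (Matrix.fromBlocks U V W D)ᵀ = 1)
    (hU : IsUnit (1 - U)) :
    (D + W * (1 - U)⁻¹ * V) * (D + W * (1 - U)⁻¹ * V)ᵀ = 1 :=
  stmt_1_general m t U V W D hN hU
end

section
/- Let n, t be naturals with t ≥ 1 and t² < 4n. Let H be a real Hadamard matrix of order 4n written in block form H = [[U, V], [W, D]] with U of size t × t, V of size t × (4n−t), W of size (4n−t) × t, and D of size (4n−t) × (4n−t). Then I + (1/√(4n))·U is invertible, the matrix Y₁ = (1/√(4n))·D − (1/(4n))·W·(I + (1/√(4n))·U)⁻¹·V is an orthogonal matrix of order 4n − t, and every entry of Y₁ satisfies (1/√(4n))·(1 − t/(√(4n) − t)) ≤ |(Y₁)_{ij}| ≤ (1/√(4n))·(1 + t/(√(4n) − t)). -/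
/-!
Scale by `s = √(4n)`: then `Q = s⁻¹ • H = [[A, B], [C, E]]` is orthogonal and
`Y₁ = E - C (1 + A)⁻¹ B`.
Writing `M = (1 + A)⁻¹`, the relation `M A = 1 - M` together with the block relations of `Q Qᵀ = 1`
makes `Y₁ Y₁ᵀ = 1` a formal identity. Every row of `A` has absolute sum at most `t / s < 1`, so
`1 + A` is strictly diagonally dominant, hence invertible, and comparing `M = 1 - M A` row by row
bounds the absolute row sums of `M` by `s / (s - t)`. Since the blocks of `H` have entries `±1`,
the correction term `(4n)⁻¹ W M V` has entries of size at most `s⁻¹ t / (s - t)`, while every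
entry of `s⁻¹ D` has size exactly `s⁻¹`.
-/

open Matrix

section Orthogonal

variable {m n R : Type*} [Fintype m] [Fintype n] [DecidableEq m] [DecidableEq n] [CommRing R]

theorem schur_mul_transpose_self_eq_one {A : Matrix m m R} {B : Matrix m n R}
    {C : Matrix n m R} {E : Matrix n n R}
    (hQ : fromBlocks A B C E * (fromBlocks A B C E)ᵀ = 1) (hA : IsUnit (1 + A)) :
    (E - C * (1 + A)⁻¹ * B) * (E - C * (1 + A)⁻¹ * B)ᵀ = 1 := by
  rw [fromBlocks_transpose, fromBlocks_multiply, ← fromBlocks_one, fromBlocks_inj] at hQ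
  obtain ⟨hAA, hAC, hCA, hCC⟩ := hQ
  set M := (1 + A)⁻¹
  have hMA : M * A = 1 - M := by
    rw [eq_sub_iff_add_eq, add_comm, ← mul_one_add]
    exact nonsing_inv_mul _ ((isUnit_iff_isUnit_det _).mp hA)
  have hAM : Aᵀ * Mᵀ = 1 - Mᵀ := by rw [← transpose_mul, hMA, transpose_sub, transpose_one]
  have hinner : Aᵀ * Mᵀ + M * A + M * (1 - A * Aᵀ) * Mᵀ = 1 := by
    rw [Matrix.mul_sub, Matrix.sub_mul, Matrix.mul_one, ← Matrix.mul_assoc M A,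
      Matrix.mul_assoc _ Aᵀ, hMA, hAM]
    noncomm_ring
  calc (E - C * M * B) * (E - C * M * B)ᵀ
      = E * Eᵀ - E * Bᵀ * Mᵀ * Cᵀ - C * M * (B * Eᵀ) + C * (M * (B * Bᵀ) * Mᵀ) * Cᵀ := by
        simp only [transpose_sub, transpose_mul, Matrix.sub_mul, Matrix.mul_sub, Matrix.mul_assoc]
        abel
    _ = E * Eᵀ + C * (Aᵀ * Mᵀ + M * A + M * (1 - A * Aᵀ) * Mᵀ) * Cᵀ := by
        rw [eq_neg_of_add_eq_zero_right hCA, eq_neg_of_add_eq_zero_right hAC,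
          eq_sub_of_add_eq' hAA]
        simp only [Matrix.mul_add, Matrix.add_mul, Matrix.neg_mul, Matrix.mul_neg,
          Matrix.mul_assoc]
        abel
    _ = 1 := by rw [hinner, Matrix.mul_one, add_comm, hCC]

end Orthogonal

section Estimates

variable {ι : Type*} [Fintype ι]

theorem isUnit_one_add_of_sum_abs_lt_one [DecidableEq ι] {A : Matrix ι ι ℝ}
    (hA : ∀ i, ∑ j, |A i j| < 1) : IsUnit (1 + A) := by
  refine (isUnit_iff_isUnit_det _).mpr (det_ne_zero_of_sum_row_lt_diag fun k => ?_).isUnit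
  have hdiag : 1 ≤ |(1 + A) k k| + |A k k| := by
    simpa using abs_add_le ((1 + A) k k) (-A k k)
  have hrow := Finset.sum_erase_add Finset.univ (fun j => |A k j|) (Finset.mem_univ k)
  have hoff : ∀ j ∈ Finset.univ.erase k, ‖(1 + A) k j‖ = |A k j| := fun j hj => by
    simp [one_apply_ne' (Finset.ne_of_mem_erase hj), Real.norm_eq_abs]
  rw [Finset.sum_congr rfl hoff, Real.norm_eq_abs]
  linarith [hA k]

theorem sum_abs_inv_one_add_apply_le [DecidableEq ι] {A : Matrix ι ι ℝ} {r : ℝ} (hr : r < 1)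
    (hA : ∀ i, ∑ j, |A i j| ≤ r) (i : ι) : ∑ j, |(1 + A)⁻¹ i j| ≤ (1 - r)⁻¹ := by
  set M := (1 + A)⁻¹
  have hM : M = 1 - M * A := by
    rw [eq_sub_iff_add_eq, ← mul_one_add]
    exact nonsing_inv_mul _ ((isUnit_iff_isUnit_det _).mp
      (isUnit_one_add_of_sum_abs_lt_one fun i => (hA i).trans_lt hr))
  have hentry : ∀ j, |M i j| ≤ |(1 : Matrix ι ι ℝ) i j| + ∑ l, |M i l| * |A l j| := fun j => by
    calc |M i j| = |(1 : Matrix ι ι ℝ) i j - ∑ l, M i l * A l j| := by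
          rw [← mul_apply, ← Matrix.sub_apply, ← hM]
      _ ≤ |(1 : Matrix ι ι ℝ) i j| + |∑ l, M i l * A l j| := abs_sub _ _
      _ ≤ |(1 : Matrix ι ι ℝ) i j| + ∑ l, |M i l| * |A l j| := by
          gcongr
          exact (Finset.abs_sum_le_sum_abs _ _).trans_eq (by simp only [abs_mul])
  have hrow : ∑ j, |M i j| ≤ 1 + r * ∑ j, |M i j| := calc
    ∑ j, |M i j| ≤ ∑ j, (|(1 : Matrix ι ι ℝ) i j| + ∑ l, |M i l| * |A l j|) :=
        Finset.sum_le_sum fun j _ => hentry j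
    _ = 1 + ∑ l, |M i l| * ∑ j, |A l j| := by
        rw [Finset.sum_add_distrib, Finset.sum_comm]
        simp [one_apply, Finset.mul_sum, apply_ite (|·|)]
    _ ≤ 1 + ∑ l, |M i l| * r := by gcongr with l; exact hA l
    _ = 1 + r * ∑ j, |M i j| := by rw [← Finset.sum_mul, mul_comm]
  rw [← one_div, le_div_iff₀ (sub_pos.mpr hr)]
  linarith

theorem abs_mul_mul_apply_le_sum_sum_abs {κ μ ν ρ : Type*} [Fintype μ] [Fintype ν]
    {W : Matrix κ μ ℝ} {V : Matrix ν ρ ℝ} (hW : ∀ i j, |W i j| ≤ 1) (hV : ∀ i j, |V i j| ≤ 1)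
    (M : Matrix μ ν ℝ) (i : κ) (j : ρ) : |(W * M * V) i j| ≤ ∑ k, ∑ l, |M k l| := calc
  |(W * M * V) i j| = |∑ l, ∑ k, W i k * M k l * V l j| := by
      simp only [mul_apply, Finset.sum_mul]
  _ ≤ ∑ l, ∑ k, |W i k * M k l * V l j| :=
      (Finset.abs_sum_le_sum_abs _ _).trans
        (Finset.sum_le_sum fun l _ => Finset.abs_sum_le_sum_abs _ _)
  _ ≤ ∑ l, ∑ k, |M k l| := by
      refine Finset.sum_le_sum fun l _ => Finset.sum_le_sum fun k _ => ?_
      rw [abs_mul, abs_mul]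
      simpa using mul_le_mul (mul_le_mul_of_nonneg_right (hW i k) (abs_nonneg (M k l))) (hV l j)
        (abs_nonneg _) (by positivity)
  _ = ∑ k, ∑ l, |M k l| := Finset.sum_comm

theorem sum_abs_inv_smul_apply_le {U : Matrix ι ι ℝ} (hU : ∀ i j, |U i j| ≤ 1) {s : ℝ}
    (hs : 0 < s) (i : ι) : ∑ j, |(s⁻¹ • U) i j| ≤ Fintype.card ι / s := calc
  ∑ j, |(s⁻¹ • U) i j| ≤ ∑ _j : ι, s⁻¹ := by
      gcongr with j
      rw [Matrix.smul_apply, smul_eq_mul, abs_mul, abs_of_pos (inv_pos.mpr hs)]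
      exact mul_le_of_le_one_right (inv_nonneg.mpr hs.le) (hU i j)
  _ = Fintype.card ι / s := by simp [div_eq_mul_inv]

theorem abs_scaled_schur_apply_bounds [DecidableEq ι] {κ : Type*} {s : ℝ}
    (hs : Fintype.card ι < s) {U : Matrix ι ι ℝ} {V : Matrix ι κ ℝ} {W : Matrix κ ι ℝ}
    {D : Matrix κ κ ℝ} (hU : ∀ i j, |U i j| ≤ 1) (hV : ∀ i j, |V i j| ≤ 1)
    (hW : ∀ i j, |W i j| ≤ 1) (hD : ∀ i j, |D i j| = 1) (i j : κ) :
    let Y := s⁻¹ • D - (s * s)⁻¹ • (W * (1 + s⁻¹ • U)⁻¹ * V)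
    s⁻¹ * (1 - (Fintype.card ι : ℝ) / (s - Fintype.card ι)) ≤ |Y i j| ∧
      |Y i j| ≤ s⁻¹ * (1 + (Fintype.card ι : ℝ) / (s - Fintype.card ι)) := by
  set t : ℝ := (Fintype.card ι : ℝ)
  have hs0 : 0 < s := (Nat.cast_nonneg _).trans_lt hs
  set M := (1 + s⁻¹ • U)⁻¹
  have hM : ∀ k, ∑ l, |M k l| ≤ (1 - t / s)⁻¹ :=
    sum_abs_inv_one_add_apply_le ((div_lt_one hs0).mpr hs) (sum_abs_inv_smul_apply_le hU hs0)
  have hcorr : |(s * s)⁻¹ * (W * M * V) i j| ≤ s⁻¹ * (t / (s - t)) := calc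
    |(s * s)⁻¹ * (W * M * V) i j| = (s * s)⁻¹ * |(W * M * V) i j| := by
        rw [abs_mul, abs_of_pos (by positivity)]
    _ ≤ (s * s)⁻¹ * ∑ _k : ι, (1 - t / s)⁻¹ := by
        gcongr
        exact (abs_mul_mul_apply_le_sum_sum_abs hW hV M i j).trans
          (Finset.sum_le_sum fun k _ => hM k)
    _ = s⁻¹ * (t / (s - t)) := by
        have : s - t ≠ 0 := (sub_pos.mpr hs).ne'
        rw [Finset.sum_const, Finset.card_univ, nsmul_eq_mul]
        change (s * s)⁻¹ * (t * (1 - t / s)⁻¹) = _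
        field_simp
  have hdiag : |s⁻¹ * D i j| = s⁻¹ := by rw [abs_mul, hD, mul_one, abs_of_pos (inv_pos.mpr hs0)]
  simp only [Matrix.sub_apply, Matrix.smul_apply, smul_eq_mul]
  constructor
  · linarith [abs_sub_abs_le_abs_sub (s⁻¹ * D i j) ((s * s)⁻¹ * (W * M * V) i j)]
  · linarith [abs_sub (s⁻¹ * D i j) ((s * s)⁻¹ * (W * M * V) i j)]

end Estimates

theorem stmt_6_general (n t : ℕ) (htn : t * t < 4 * n)
    (U : Matrix (Fin t) (Fin t) ℝ) (V : Matrix (Fin t) (Fin (4 * n - t)) ℝ)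
    (W : Matrix (Fin (4 * n - t)) (Fin t) ℝ)
    (D : Matrix (Fin (4 * n - t)) (Fin (4 * n - t)) ℝ)
    (hent : ∀ i j, Matrix.fromBlocks U V W D i j = 1 ∨ Matrix.fromBlocks U V W D i j = -1)
    (hH : Matrix.fromBlocks U V W D * (Matrix.fromBlocks U V W D)ᵀ
            = (4 * (n : ℝ)) • 1) :
    IsUnit (1 + (Real.sqrt (4 * (n : ℝ)))⁻¹ • U) ∧
    (let Y₁ := (Real.sqrt (4 * (n : ℝ)))⁻¹ • D -
        (4 * (n : ℝ))⁻¹ • (W * (1 + (Real.sqrt (4 * (n : ℝ)))⁻¹ • U)⁻¹ * V);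
      Y₁ * Y₁ᵀ = 1 ∧
      ∀ i j, (Real.sqrt (4 * (n : ℝ)))⁻¹ *
               (1 - (t : ℝ) / (Real.sqrt (4 * (n : ℝ)) - (t : ℝ))) ≤ |Y₁ i j| ∧
             |Y₁ i j| ≤ (Real.sqrt (4 * (n : ℝ)))⁻¹ *
               (1 + (t : ℝ) / (Real.sqrt (4 * (n : ℝ)) - (t : ℝ)))) := by
  set s := Real.sqrt (4 * (n : ℝ)) with hs
  have hss : s * s = 4 * n := Real.mul_self_sqrt (by positivity)
  have hts : (t : ℝ) < s := by
    rw [hs, Real.lt_sqrt (Nat.cast_nonneg t), sq]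
    exact_mod_cast htn
  have hs0 : 0 < s := (Nat.cast_nonneg t).trans_lt hts
  have habs : ∀ i j, |fromBlocks U V W D i j| = 1 := fun i j => by
    rcases hent i j with h | h <;> simp [h]
  have hU : ∀ i j, |U i j| ≤ 1 := fun i j => (habs (.inl i) (.inl j)).le
  have hV : ∀ i j, |V i j| ≤ 1 := fun i j => (habs (.inl i) (.inr j)).le
  have hW : ∀ i j, |W i j| ≤ 1 := fun i j => (habs (.inr i) (.inl j)).le
  have hD : ∀ i j, |D i j| = 1 := fun i j => habs (.inr i) (.inr j)
  have hunit : IsUnit (1 + s⁻¹ • U) := isUnit_one_add_of_sum_abs_lt_one fun i =>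
    (sum_abs_inv_smul_apply_le hU hs0 i).trans_lt (by simpa [div_lt_one hs0] using hts)
  have hQ : fromBlocks (s⁻¹ • U) (s⁻¹ • V) (s⁻¹ • W) (s⁻¹ • D) *
      (fromBlocks (s⁻¹ • U) (s⁻¹ • V) (s⁻¹ • W) (s⁻¹ • D))ᵀ = 1 := by
    rw [← fromBlocks_smul, transpose_smul, smul_mul_smul_comm, hH, smul_smul, ← hss,
      ← mul_inv, inv_mul_cancel₀ (by positivity), one_smul]
  refine ⟨hunit, ?_, fun i j => ?_⟩
  · rw [← hss]
    simpa [Matrix.mul_smul, Matrix.smul_mul, smul_smul, mul_inv] using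
      schur_mul_transpose_self_eq_one hQ hunit
  · rw [← hss]
    simpa only [Fintype.card_fin] using
      abs_scaled_schur_apply_bounds (by simpa using hts) hU hV hW hD i j

theorem stmt_6 (n t : ℕ) (ht : 1 ≤ t) (htn : t * t < 4 * n)
    (U : Matrix (Fin t) (Fin t) ℝ) (V : Matrix (Fin t) (Fin (4 * n - t)) ℝ)
    (W : Matrix (Fin (4 * n - t)) (Fin t) ℝ)
    (D : Matrix (Fin (4 * n - t)) (Fin (4 * n - t)) ℝ)
    (hent : ∀ i j, Matrix.fromBlocks U V W D i j = 1 ∨ Matrix.fromBlocks U V W D i j = -1)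
    (hH : Matrix.fromBlocks U V W D * (Matrix.fromBlocks U V W D)ᵀ
            = (4 * (n : ℝ)) • 1) :
    IsUnit (1 + (Real.sqrt (4 * (n : ℝ)))⁻¹ • U) ∧
    (let Y₁ := (Real.sqrt (4 * (n : ℝ)))⁻¹ • D -
        (4 * (n : ℝ))⁻¹ • (W * (1 + (Real.sqrt (4 * (n : ℝ)))⁻¹ • U)⁻¹ * V);
      Y₁ * Y₁ᵀ = 1 ∧
      ∀ i j, (Real.sqrt (4 * (n : ℝ)))⁻¹ *
               (1 - (t : ℝ) / (Real.sqrt (4 * (n : ℝ)) - (t : ℝ))) ≤ |Y₁ i j| ∧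
             |Y₁ i j| ≤ (Real.sqrt (4 * (n : ℝ)))⁻¹ *
               (1 + (t : ℝ) / (Real.sqrt (4 * (n : ℝ)) - (t : ℝ)))) :=
  stmt_6_general n t htn U V W D hent hH
end

section
/- Let n, t be naturals with t ≥ 1 and t² < 4n. Let H be a real Hadamard matrix of order 4n written in block form H = [[U, V], [W, D]] with U of size t × t, V of size t × (4n−t), W of size (4n−t) × t, and D of size (4n−t) × (4n−t). Then I − (1/√(4n))·U is invertible, the matrix Y₂ = (1/√(4n))·D + (1/(4n))·W·(I − (1/√(4n))·U)⁻¹·V is an orthogonal matrix of order 4n − t, and every entry of Y₂ satisfies (1/√(4n))·(1 − t/(√(4n) − t)) ≤ |(Y₂)_{ij}| ≤ (1/√(4n))·(1 + t/(√(4n) − t)). -/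
/-!
Scaling by `s = √(4n)` turns `H` into an orthogonal matrix `[[A, B], [C, E]]` all of whose
entries have absolute value `1/s`. In the `ℓ∞` operator norm `‖A‖ ≤ t/s < 1`, so `1 - A` is
invertible with `‖(1 - A)⁻¹‖ ≤ 1/(1 - t/s)`, and `Y₂ = E + C (1 - A)⁻¹ B`. Orthogonality of
`Y₂` is pure block algebra: with `M = (1 - A)⁻¹` one has `M A = M - 1`, and the block relations
of `Y Yᵀ = 1` make every term of `Y₂ Y₂ᵀ - 1` cancel. Each entry of the correction
`C M B` is at most `s⁻² · t ‖M‖ ≤ (1/s) · t/(s - t)`, which gives the entry bounds around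
`|E k j| = 1/s`.
-/

open Matrix

attribute [local instance] Matrix.linftyOpNormedRing Matrix.linftyOpNormedAlgebra

theorem norm_le_norm_one_div_one_sub_norm {R : Type*} [NormedRing R] {a m : R}
    (hm : m * (1 - a) = 1) (ha : ‖a‖ < 1) : ‖m‖ ≤ ‖(1 : R)‖ / (1 - ‖a‖) := by
  have hm' : m = 1 + m * a := by rw [← hm]; noncomm_ring
  have : ‖m‖ ≤ ‖(1 : R)‖ + ‖m‖ * ‖a‖ :=
    calc ‖m‖ = ‖1 + m * a‖ := congrArg _ hm'
      _ ≤ ‖(1 : R)‖ + ‖m‖ * ‖a‖ := (norm_add_le _ _).trans (by gcongr; exact norm_mul_le _ _)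
  rw [le_div_iff₀ (by linarith)]
  linarith

section LinftyOpNorm

variable {ι : Type*} [Fintype ι] [DecidableEq ι]

theorem Matrix.linfty_opNorm_one_le : ‖(1 : Matrix ι ι ℝ)‖ ≤ 1 := by
  rw [← diagonal_one, linfty_opNorm_diagonal]
  exact pi_norm_le_iff_of_nonneg zero_le_one |>.mpr fun _ => norm_one.le

theorem Matrix.sum_abs_apply_le_linfty_opNorm (A : Matrix ι ι ℝ) (i : ι) :
    ∑ j, |A i j| ≤ ‖A‖ := by
  have := NNReal.coe_le_coe.mpr (Finset.le_sup (f := fun i => ∑ j, ‖A i j‖₊) (Finset.mem_univ i))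
  rw [linfty_opNorm_def]
  simpa using this

theorem Matrix.linfty_opNorm_le_card_mul_of_abs_le {A : Matrix ι ι ℝ} {c : ℝ} (hc : 0 ≤ c)
    (hA : ∀ i j, |A i j| ≤ c) : ‖A‖ ≤ Fintype.card ι * c := by
  rw [linfty_opNorm_def, ← Real.coe_toNNReal _ (by positivity : (0:ℝ) ≤ Fintype.card ι * c)]
  refine NNReal.coe_le_coe.mpr (Finset.sup_le fun i _ => ?_)
  rw [← NNReal.coe_le_coe, Real.coe_toNNReal _ (by positivity)]
  push_cast
  calc ∑ j, ‖A i j‖ ≤ ∑ _j : ι, c := Finset.sum_le_sum fun j _ => hA i j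
    _ = Fintype.card ι * c := by simp

theorem Matrix.sum_sum_abs_apply_le_card_mul_linfty_opNorm (A : Matrix ι ι ℝ) :
    ∑ i, ∑ j, |A i j| ≤ Fintype.card ι * ‖A‖ :=
  calc ∑ i, ∑ j, |A i j| ≤ ∑ _i : ι, ‖A‖ :=
        Finset.sum_le_sum fun i _ => sum_abs_apply_le_linfty_opNorm A i
    _ = Fintype.card ι * ‖A‖ := by simp

end LinftyOpNorm

theorem Matrix.abs_mul_mul_apply_le {l m n o R : Type*} [Fintype m] [Fintype n]
    [CommRing R] [LinearOrder R] [IsStrictOrderedRing R]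
    {C : Matrix l m R} {M : Matrix m n R} {B : Matrix n o R} {c b : R}
    (hC : ∀ k p, |C k p| ≤ c) (hB : ∀ q j, |B q j| ≤ b) (k : l) (j : o) :
    |(C * M * B) k j| ≤ c * b * ∑ p, ∑ q, |M p q| := by
  calc |(C * M * B) k j| = |∑ p, ∑ q, C k p * M p q * B q j| := by
        simp only [mul_apply, Finset.sum_mul]; rw [Finset.sum_comm]
    _ ≤ ∑ p, ∑ q, |C k p * M p q * B q j| :=
        (Finset.abs_sum_le_sum_abs _ _).trans
          (Finset.sum_le_sum fun p _ => Finset.abs_sum_le_sum_abs _ _)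
    _ ≤ ∑ p, ∑ q, c * b * |M p q| := by
        gcongr with p _ q _
        have hc : 0 ≤ c := (abs_nonneg _).trans (hC k p)
        rw [abs_mul, abs_mul, mul_right_comm c]
        gcongr
        exacts [hC k p, hB q j]
    _ = c * b * ∑ p, ∑ q, |M p q| := by simp only [Finset.mul_sum]

section BlockAlgebra

variable {ι κ R : Type*} [Fintype ι] [Fintype κ] [DecidableEq ι] [DecidableEq κ] [CommRing R]

theorem Matrix.add_mul_inv_one_sub_mul_mul_transpose_eq_one {A : Matrix ι ι R}
    {B : Matrix ι κ R} {C : Matrix κ ι R} {E : Matrix κ κ R}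
    (hY : fromBlocks A B C E * (fromBlocks A B C E)ᵀ = 1) (hA : IsUnit (1 - A)) :
    (E + C * (1 - A)⁻¹ * B) * (E + C * (1 - A)⁻¹ * B)ᵀ = 1 := by
  rw [fromBlocks_transpose, fromBlocks_multiply, ← fromBlocks_one, fromBlocks_inj] at hY
  obtain ⟨hAA, hAC, hCA, hCC⟩ := hY
  set M := (1 - A)⁻¹
  have hMA : M * A = M - 1 := by
    have := nonsing_inv_mul (1 - A) ((isUnit_iff_isUnit_det _).mp hA)
    rw [mul_sub, mul_one] at this
    rw [← this, sub_sub_cancel]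
  have hAM : Aᵀ * Mᵀ = Mᵀ - 1 := by
    rw [← transpose_mul, hMA, transpose_sub, transpose_one]
  rw [transpose_add, transpose_mul, transpose_mul]
  calc (E + C * M * B) * (Eᵀ + Bᵀ * (Mᵀ * Cᵀ))
      = E * Eᵀ + (E * Bᵀ) * Mᵀ * Cᵀ + C * M * (B * Eᵀ) + C * M * (B * Bᵀ) * Mᵀ * Cᵀ := by
        simp only [Matrix.mul_add, Matrix.add_mul, Matrix.mul_assoc]; abel
    _ = (1 - C * Cᵀ) + -(C * Aᵀ) * Mᵀ * Cᵀ + C * M * -(A * Cᵀ)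
          + C * M * (1 - A * Aᵀ) * Mᵀ * Cᵀ := by
        rw [eq_sub_of_add_eq' hAA, eq_neg_of_add_eq_zero_right hAC,
          eq_neg_of_add_eq_zero_right hCA, eq_sub_of_add_eq' hCC]
    _ = 1 - C * (1 + Aᵀ * Mᵀ + M * A - M * Mᵀ + (M * A) * (Aᵀ * Mᵀ)) * Cᵀ := by
        simp only [Matrix.mul_add, Matrix.add_mul, Matrix.mul_sub, Matrix.sub_mul,
          Matrix.mul_neg, Matrix.neg_mul, Matrix.mul_one, Matrix.mul_assoc]
        abel
    _ = 1 := by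
        have hK : 1 + (Mᵀ - 1) + (M - 1) - M * Mᵀ + (M - 1) * (Mᵀ - 1) = 0 := by noncomm_ring
        rw [hMA, hAM, hK, Matrix.mul_zero, Matrix.zero_mul, sub_zero]

end BlockAlgebra

section Perturbation

variable {ι κ : Type*} [Fintype ι] [DecidableEq ι]

theorem Matrix.isUnit_one_sub_of_abs_apply_le {A : Matrix ι ι ℝ} {c : ℝ} (hc : 0 ≤ c)
    (hA : ∀ i j, |A i j| ≤ c) (h : Fintype.card ι * c < 1) : IsUnit (1 - A) :=
  isUnit_one_sub_of_norm_lt_one ((linfty_opNorm_le_card_mul_of_abs_le hc hA).trans_lt h)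

theorem Matrix.abs_mul_inv_one_sub_mul_apply_le {A : Matrix ι ι ℝ} {B : Matrix ι κ ℝ}
    {C : Matrix κ ι ℝ} {c : ℝ} (hc : 0 ≤ c) (hA : ∀ i j, |A i j| ≤ c)
    (hB : ∀ i j, |B i j| ≤ c) (hC : ∀ i j, |C i j| ≤ c) (h : Fintype.card ι * c < 1)
    (k j : κ) :
    |(C * (1 - A)⁻¹ * B) k j| ≤ c * (Fintype.card ι * c / (1 - Fintype.card ι * c)) := by
  set r := Fintype.card ι * c
  have hAr : ‖A‖ ≤ r := linfty_opNorm_le_card_mul_of_abs_le hc hA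
  have hM : ‖(1 - A)⁻¹‖ ≤ 1 / (1 - r) := by
    have hinv := nonsing_inv_mul (1 - A)
      ((isUnit_iff_isUnit_det _).mp (isUnit_one_sub_of_abs_apply_le hc hA h))
    refine (norm_le_norm_one_div_one_sub_norm hinv (hAr.trans_lt h)).trans ?_
    exact div_le_div₀ zero_le_one linfty_opNorm_one_le (by linarith) (by linarith)
  calc |(C * (1 - A)⁻¹ * B) k j| ≤ c * c * ∑ p, ∑ q, |(1 - A)⁻¹ p q| :=
        abs_mul_mul_apply_le hC hB k j
    _ ≤ c * c * (Fintype.card ι * (1 / (1 - r))) := by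
        gcongr
        exact (sum_sum_abs_apply_le_card_mul_linfty_opNorm _).trans (by gcongr)
    _ = c * (r / (1 - r)) := by ring

theorem Matrix.abs_abs_add_mul_inv_one_sub_mul_apply_sub_le {A : Matrix ι ι ℝ}
    {B : Matrix ι κ ℝ} {C : Matrix κ ι ℝ} {E : Matrix κ κ ℝ} {c : ℝ}
    (hY : ∀ i j, |fromBlocks A B C E i j| = c) (h : Fintype.card ι * c < 1) (k j : κ) :
    |(|(E + C * (1 - A)⁻¹ * B) k j| - c)| ≤
      c * (Fintype.card ι * c / (1 - Fintype.card ι * c)) := by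
  have hE : |E k j| = c := hY (.inr k) (.inr j)
  have hX := abs_mul_inv_one_sub_mul_apply_le (A := A) (B := B) (C := C) (hE ▸ abs_nonneg _)
    (fun i j => (hY (.inl i) (.inl j)).le) (fun i j => (hY (.inl i) (.inr j)).le)
    (fun i j => (hY (.inr i) (.inl j)).le) h k j
  calc |(|(E + C * (1 - A)⁻¹ * B) k j| - c)|
      = |(|E k j + (C * (1 - A)⁻¹ * B) k j| - |E k j|)| := by rw [add_apply, hE]
    _ ≤ |E k j + (C * (1 - A)⁻¹ * B) k j - E k j| := abs_abs_sub_abs_le_abs_sub _ _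
    _ ≤ _ := by rwa [add_sub_cancel_left]

end Perturbation

theorem stmt_7_general (n t : ℕ) (htn : t * t < 4 * n)
    (U : Matrix (Fin t) (Fin t) ℝ) (V : Matrix (Fin t) (Fin (4 * n - t)) ℝ)
    (W : Matrix (Fin (4 * n - t)) (Fin t) ℝ)
    (D : Matrix (Fin (4 * n - t)) (Fin (4 * n - t)) ℝ)
    (hent : ∀ i j, Matrix.fromBlocks U V W D i j = 1 ∨ Matrix.fromBlocks U V W D i j = -1)
    (hH : Matrix.fromBlocks U V W D * (Matrix.fromBlocks U V W D)ᵀ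
            = (4 * (n : ℝ)) • 1) :
    IsUnit (1 - (Real.sqrt (4 * (n : ℝ)))⁻¹ • U) ∧
    (let Y₂ := (Real.sqrt (4 * (n : ℝ)))⁻¹ • D +
        (4 * (n : ℝ))⁻¹ • (W * (1 - (Real.sqrt (4 * (n : ℝ)))⁻¹ • U)⁻¹ * V);
      Y₂ * Y₂ᵀ = 1 ∧
      ∀ i j, (Real.sqrt (4 * (n : ℝ)))⁻¹ *
               (1 - (t : ℝ) / (Real.sqrt (4 * (n : ℝ)) - (t : ℝ))) ≤ |Y₂ i j| ∧
             |Y₂ i j| ≤ (Real.sqrt (4 * (n : ℝ)))⁻¹ *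
               (1 + (t : ℝ) / (Real.sqrt (4 * (n : ℝ)) - (t : ℝ)))) := by
  set s := Real.sqrt (4 * (n : ℝ))
  have hss : s * s = 4 * n := Real.mul_self_sqrt (by positivity)
  have hts : (t : ℝ) < s := Real.lt_sqrt t.cast_nonneg |>.mpr (by rw [sq]; exact_mod_cast htn)
  have hs0 : 0 < s := t.cast_nonneg.trans_lt hts
  have horth : fromBlocks (s⁻¹ • U) (s⁻¹ • V) (s⁻¹ • W) (s⁻¹ • D) *
      (fromBlocks (s⁻¹ • U) (s⁻¹ • V) (s⁻¹ • W) (s⁻¹ • D))ᵀ = 1 := by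
    rw [← fromBlocks_smul, transpose_smul, Matrix.smul_mul, Matrix.mul_smul, hH, smul_smul,
      smul_smul, ← hss, show s⁻¹ * s⁻¹ * (s * s) = 1 by field_simp, one_smul]
  have habs : ∀ i j, |fromBlocks (s⁻¹ • U) (s⁻¹ • V) (s⁻¹ • W) (s⁻¹ • D) i j| = s⁻¹ := by
    intro i j
    rw [← fromBlocks_smul, Matrix.smul_apply, smul_eq_mul, abs_mul, abs_of_pos (inv_pos.2 hs0)]
    rcases hent i j with h | h <;> simp [h]
  have hcard : Fintype.card (Fin t) * s⁻¹ < 1 := by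
    rwa [Fintype.card_fin, ← div_eq_mul_inv, div_lt_one hs0]
  have hunit : IsUnit (1 - s⁻¹ • U) := isUnit_one_sub_of_abs_apply_le (inv_nonneg.2 hs0.le)
    (fun i j => (habs (.inl i) (.inl j)).le) hcard
  have hY₂ : s⁻¹ • D + (4 * (n : ℝ))⁻¹ • (W * (1 - s⁻¹ • U)⁻¹ * V) =
      s⁻¹ • D + s⁻¹ • W * (1 - s⁻¹ • U)⁻¹ * (s⁻¹ • V) := by
    simp only [Matrix.smul_mul, Matrix.mul_smul, smul_smul, ← hss, mul_inv]
  have hr : (t : ℝ) * s⁻¹ / (1 - t * s⁻¹) = t / (s - t) := by field_simp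
  refine ⟨hunit, ?_⟩
  dsimp only
  rw [hY₂]
  refine ⟨add_mul_inv_one_sub_mul_mul_transpose_eq_one horth hunit, fun i j => ?_⟩
  have hdev := abs_abs_add_mul_inv_one_sub_mul_apply_sub_le habs hcard i j
  rw [Fintype.card_fin, hr, abs_sub_le_iff] at hdev
  constructor <;> linarith [hdev.1, hdev.2]

theorem stmt_7 (n t : ℕ) (ht : 1 ≤ t) (htn : t * t < 4 * n)
    (U : Matrix (Fin t) (Fin t) ℝ) (V : Matrix (Fin t) (Fin (4 * n - t)) ℝ)
    (W : Matrix (Fin (4 * n - t)) (Fin t) ℝ)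
    (D : Matrix (Fin (4 * n - t)) (Fin (4 * n - t)) ℝ)
    (hent : ∀ i j, Matrix.fromBlocks U V W D i j = 1 ∨ Matrix.fromBlocks U V W D i j = -1)
    (hH : Matrix.fromBlocks U V W D * (Matrix.fromBlocks U V W D)ᵀ
            = (4 * (n : ℝ)) • 1) :
    IsUnit (1 - (Real.sqrt (4 * (n : ℝ)))⁻¹ • U) ∧
    (let Y₂ := (Real.sqrt (4 * (n : ℝ)))⁻¹ • D +
        (4 * (n : ℝ))⁻¹ • (W * (1 - (Real.sqrt (4 * (n : ℝ)))⁻¹ • U)⁻¹ * V);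
      Y₂ * Y₂ᵀ = 1 ∧
      ∀ i j, (Real.sqrt (4 * (n : ℝ)))⁻¹ *
               (1 - (t : ℝ) / (Real.sqrt (4 * (n : ℝ)) - (t : ℝ))) ≤ |Y₂ i j| ∧
             |Y₂ i j| ≤ (Real.sqrt (4 * (n : ℝ)))⁻¹ *
               (1 + (t : ℝ) / (Real.sqrt (4 * (n : ℝ)) - (t : ℝ)))) :=
  stmt_7_general n t htn U V W D hent hH
end

section
/- Let n ≥ 1 be a natural and let H be a real Hadamard matrix of order 4n whose (1,1) entry equals 1, written in block form H = [[1, v], [w, D]] where v is a 1 × (4n−1) row vector, w is a (4n−1) × 1 column vector, and D is (4n−1) × (4n−1). Then the matrix Y = (1/√(4n)) · (D − (1/(√(4n) + 1)) · w·v) is an orthogonal matrix of order 4n − 1, and for every entry of Y, |Y_{ij}| equals either (1/√(4n))·(1 + 1/(√(4n)+1)) or (1/√(4n))·(1 − 1/(√(4n)+1)). -/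
/-!
Write `H = [[1, v], [w, D]]` with `H Hᵀ = s² I`. Comparing blocks gives `v vᵀ = s² - 1`,
`D vᵀ = -w` and `D Dᵀ = s² I - w wᵀ`, so with `c = 1 / (s + 1)` the product
`(D - c w v)(D - c w v)ᵀ` equals `s² I + (-1 + 2c + c² (s² - 1)) w wᵀ`, and the coefficient
of `w wᵀ` vanishes because `c (s + 1) = 1`. Each entry of `D - c w v` is `d - c x y` with
`d, x, y = ±1`, hence has absolute value `1 + c` or `1 - c`.
-/

open Matrix

variable {K k : Type*}

theorem fromBlocks_one_mul_transpose_eq_smul_one [CommRing K] [Fintype k] [DecidableEq k]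
    {m : K} {v : Matrix (Fin 1) k K} {w : Matrix k (Fin 1) K} {D : Matrix k k K}
    (hH : fromBlocks 1 v w D * (fromBlocks 1 v w D)ᵀ = m • 1) :
    v * vᵀ = m • 1 - 1 ∧ D * vᵀ = -w ∧ D * Dᵀ = m • 1 - w * wᵀ := by
  rw [fromBlocks_transpose, fromBlocks_multiply, ← fromBlocks_one, fromBlocks_smul,
    fromBlocks_inj] at hH
  obtain ⟨h11, -, h21, h22⟩ := hH
  rw [transpose_one, one_mul] at h11
  rw [transpose_one, Matrix.mul_one, smul_zero] at h21
  exact ⟨eq_sub_of_add_eq' h11, eq_neg_of_add_eq_zero_right h21, eq_sub_of_add_eq' h22⟩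

def hadamardCore [Field K] (s : K) (v : Matrix (Fin 1) k K) (w : Matrix k (Fin 1) K)
    (D : Matrix k k K) : Matrix k k K :=
  s⁻¹ • (D - (s + 1)⁻¹ • (w * v))

theorem hadamardCore_mul_transpose [Field K] [Fintype k] [DecidableEq k] {s : K} (hs : s ≠ 0)
    (hs1 : s + 1 ≠ 0) {v : Matrix (Fin 1) k K} {w : Matrix k (Fin 1) K} {D : Matrix k k K}
    (hH : fromBlocks 1 v w D * (fromBlocks 1 v w D)ᵀ = (s * s) • 1) :
    hadamardCore s v w D * (hadamardCore s v w D)ᵀ = 1 := by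
  obtain ⟨hvv, hDv, hDD⟩ := fromBlocks_one_mul_transpose_eq_smul_one hH
  have hvD : v * Dᵀ = -wᵀ := by
    rw [← transpose_transpose v, ← transpose_mul, hDv, transpose_neg]
  set c := (s + 1)⁻¹
  have expand : hadamardCore s v w D * (hadamardCore s v w D)ᵀ =
      (s⁻¹ * s⁻¹) • (D * Dᵀ - c • (D * vᵀ * wᵀ) - c • (w * (v * Dᵀ))
        + (c * c) • (w * (v * vᵀ) * wᵀ)) := by
    simp only [hadamardCore, transpose_smul, transpose_sub, transpose_mul, sub_mul, mul_sub,
      Matrix.smul_mul, Matrix.mul_smul, Matrix.mul_assoc, smul_smul]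
    module
  rw [expand, hDD, hDv, hvD, hvv, Matrix.mul_sub, Matrix.sub_mul, Matrix.mul_smul,
    Matrix.smul_mul, Matrix.mul_one]
  simp only [Matrix.neg_mul, Matrix.mul_neg, smul_neg]
  match_scalars
  · field_simp
  · simp only [c]
    field_simp
    ring

theorem abs_sub_mul_eq_one_add_or_one_sub [Field K] [LinearOrder K]
    [IsStrictOrderedRing K] {a b c : K} (ha : |a| = 1) (hb : |b| = 1) (hc0 : 0 ≤ c)
    (hc1 : c ≤ 1) : |a - c * b| = 1 + c ∨ |a - c * b| = 1 - c := by
  rw [abs_eq zero_le_one] at ha hb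
  rcases ha with rfl | rfl <;> rcases hb with rfl | rfl
  · right; rw [abs_of_nonneg] <;> linarith
  · left; rw [abs_of_nonneg] <;> linarith
  · left; rw [abs_of_nonpos] <;> linarith
  · right; rw [abs_of_nonpos] <;> linarith

theorem hadamardCore_apply [Field K] (s : K) (v : Matrix (Fin 1) k K) (w : Matrix k (Fin 1) K)
    (D : Matrix k k K) (i j : k) :
    hadamardCore s v w D i j = s⁻¹ * (D i j - (s + 1)⁻¹ * (w i 0 * v 0 j)) := by
  simp [hadamardCore, Matrix.mul_apply]

theorem abs_hadamardCore_apply [Field K] [LinearOrder K] [IsStrictOrderedRing K] {s : K}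
    (hs : 0 ≤ s) {v : Matrix (Fin 1) k K} {w : Matrix k (Fin 1) K} {D : Matrix k k K}
    (hent : ∀ i j, |fromBlocks 1 v w D i j| = 1) (i j : k) :
    |hadamardCore s v w D i j| = s⁻¹ * (1 + 1 / (s + 1)) ∨
      |hadamardCore s v w D i j| = s⁻¹ * (1 - 1 / (s + 1)) := by
  have hc0 : 0 ≤ (s + 1)⁻¹ := by positivity
  have hc1 : (s + 1)⁻¹ ≤ 1 := inv_le_one_of_one_le₀ (by linarith)
  have hwv : |w i 0 * v 0 j| = 1 := by
    have hw : |w i 0| = 1 := by simpa using hent (.inr i) (.inl 0)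
    have hv : |v 0 j| = 1 := by simpa using hent (.inl 0) (.inr j)
    rw [abs_mul, hw, hv, one_mul]
  rw [hadamardCore_apply, abs_mul, abs_of_nonneg (inv_nonneg.mpr hs), one_div]
  have hD : |D i j| = 1 := by simpa using hent (.inr i) (.inr j)
  rcases abs_sub_mul_eq_one_add_or_one_sub hD hwv hc0 hc1 with h | h
  · exact .inl (by rw [h])
  · exact .inr (by rw [h])

theorem stmt_8 (n : ℕ) (hn : 1 ≤ n)
    (v : Matrix (Fin 1) (Fin (4 * n - 1)) ℝ) (w : Matrix (Fin (4 * n - 1)) (Fin 1) ℝ)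
    (D : Matrix (Fin (4 * n - 1)) (Fin (4 * n - 1)) ℝ)
    (hent : ∀ i j, Matrix.fromBlocks 1 v w D i j = 1 ∨ Matrix.fromBlocks 1 v w D i j = -1)
    (hH : Matrix.fromBlocks 1 v w D * (Matrix.fromBlocks 1 v w D)ᵀ
            = (4 * (n : ℝ)) • 1) :
    (let Y := (Real.sqrt (4 * (n : ℝ)))⁻¹ •
        (D - (Real.sqrt (4 * (n : ℝ)) + 1)⁻¹ • (w * v));
      Y * Yᵀ = 1 ∧
      ∀ i j,
        |Y i j| = (Real.sqrt (4 * (n : ℝ)))⁻¹ * (1 + 1 / (Real.sqrt (4 * (n : ℝ)) + 1)) ∨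
        |Y i j| = (Real.sqrt (4 * (n : ℝ)))⁻¹ * (1 - 1 / (Real.sqrt (4 * (n : ℝ)) + 1))) := by
  have h4n : (0 : ℝ) < 4 * n := mul_pos four_pos (Nat.cast_pos.mpr hn)
  have hs : 0 < Real.sqrt (4 * n) := Real.sqrt_pos.mpr h4n
  rw [← Real.mul_self_sqrt h4n.le] at hH
  refine ⟨hadamardCore_mul_transpose hs.ne' (by positivity) hH,
    abs_hadamardCore_apply hs.le fun i j => ?_⟩
  exact (abs_eq zero_le_one).mpr (hent i j)
end

section
/- Let n ≥ 1 be a natural and let H be a real Hadamard matrix of order 4n whose (1,1) entry equals 1, written in block form H = [[1, v], [w, D]] where v is a 1 × (4n−1) row vector, w is a (4n−1) × 1 column vector, and D is (4n−1) × (4n−1). Then the matrix Y = (1/√(4n)) · (D + (1/(√(4n) − 1)) · w·v) is an orthogonal matrix of order 4n − 1, and for every entry of Y, |Y_{ij}| equals either (1/√(4n))·(1 + 1/(√(4n)−1)) or (1/√(4n))·(1 − 1/(√(4n)−1)). -/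
/-!
For `H = [[1, v], [w, D]]`, the relation `H Hᵀ = 4n` reads `v vᵀ = 4n - 1`, `D vᵀ = -w` and
`D Dᵀ = 4n - w wᵀ`, and with `s = √(4n)` the rank-one correction `(s - 1)⁻¹ w v` is exactly what
cancels the `w wᵀ` defect of `D Dᵀ`, since `-1 - 2/(s - 1) + (s² - 1)/(s - 1)² = 0`. The entries
of `Y` are `s⁻¹ (D_ij ± (s - 1)⁻¹)` with `D_ij = ±1`, whence the two possible absolute values.
-/

open Matrix

section Blocks

variable {R ι κ : Type*} [CommRing R] [Fintype ι] [Fintype κ] [DecidableEq ι] [DecidableEq κ]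
  {m : R} {v : Matrix ι κ R} {w : Matrix κ ι R} {D : Matrix κ κ R}

theorem blocks_of_fromBlocks_one_mul_transpose_eq_smul
    (h : fromBlocks 1 v w D * (fromBlocks 1 v w D)ᵀ = m • 1) :
    v * vᵀ = (m - 1) • 1 ∧ D * vᵀ = -w ∧ D * Dᵀ = m • 1 - w * wᵀ := by
  rw [fromBlocks_transpose, fromBlocks_multiply, ← fromBlocks_one, fromBlocks_smul,
    fromBlocks_inj] at h
  obtain ⟨h11, -, h21, h22⟩ := h
  simp only [transpose_one, Matrix.mul_one, smul_zero] at h11 h21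
  refine ⟨?_, ?_, ?_⟩
  · rw [sub_smul, one_smul, ← h11, add_sub_cancel_left]
  · rw [eq_neg_iff_add_eq_zero, add_comm, h21]
  · rw [← h22, add_sub_cancel_left]

end Blocks

section Orthogonal

variable {K ι κ : Type*} [Field K] [Fintype ι] [Fintype κ] [DecidableEq ι] [DecidableEq κ]
  {v : Matrix ι κ K} {w : Matrix κ ι K} {D : Matrix κ κ K}

theorem rankOneCorrection_mul_transpose_eq_one {s : K} (hs : s ≠ 0) (hs1 : s - 1 ≠ 0)
    (h : fromBlocks 1 v w D * (fromBlocks 1 v w D)ᵀ = (s * s) • 1) :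
    (s⁻¹ • (D + (s - 1)⁻¹ • (w * v))) * (s⁻¹ • (D + (s - 1)⁻¹ • (w * v)))ᵀ = 1 := by
  obtain ⟨hvv, hDv, hDD⟩ := blocks_of_fromBlocks_one_mul_transpose_eq_smul h
  have hvD : v * Dᵀ = -wᵀ := by
    rw [← transpose_transpose v, ← transpose_mul, hDv, transpose_neg]
  have hwvvw : w * v * (vᵀ * wᵀ) = (s * s - 1) • (w * wᵀ) := by
    rw [Matrix.mul_assoc, ← Matrix.mul_assoc v, hvv, Matrix.smul_mul, Matrix.one_mul,
    Matrix.mul_smul]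
  simp only [transpose_smul, transpose_add, transpose_mul, Matrix.smul_mul, Matrix.mul_smul,
    Matrix.add_mul, Matrix.mul_add]
  rw [hDD, ← Matrix.mul_assoc, hDv, Matrix.mul_assoc, hvD, hwvvw, Matrix.neg_mul, Matrix.mul_neg]
  match_scalars
  · field_simp
  · field_simp
    ring

end Orthogonal

theorem abs_add_mul_eq_or {d e : ℝ} (hd : d = 1 ∨ d = -1) (he : e = 1 ∨ e = -1) (c : ℝ) :
    |d + c * e| = |1 + c| ∨ |d + c * e| = |1 - c| := by
  rcases hd with rfl | rfl <;> rcases he with rfl | rfl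
  · left; ring_nf
  · right; ring_nf
  · right; rw [← abs_neg]; ring_nf
  · left; rw [← abs_neg]; ring_nf

theorem stmt_9 (n : ℕ) (hn : 1 ≤ n)
    (v : Matrix (Fin 1) (Fin (4 * n - 1)) ℝ) (w : Matrix (Fin (4 * n - 1)) (Fin 1) ℝ)
    (D : Matrix (Fin (4 * n - 1)) (Fin (4 * n - 1)) ℝ)
    (hent : ∀ i j, Matrix.fromBlocks 1 v w D i j = 1 ∨ Matrix.fromBlocks 1 v w D i j = -1)
    (hH : Matrix.fromBlocks 1 v w D * (Matrix.fromBlocks 1 v w D)ᵀ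
            = (4 * (n : ℝ)) • 1) :
    (let Y := (Real.sqrt (4 * (n : ℝ)))⁻¹ •
        (D + (Real.sqrt (4 * (n : ℝ)) - 1)⁻¹ • (w * v));
      Y * Yᵀ = 1 ∧
      ∀ i j,
        |Y i j| = (Real.sqrt (4 * (n : ℝ)))⁻¹ * (1 + 1 / (Real.sqrt (4 * (n : ℝ)) - 1)) ∨
        |Y i j| = (Real.sqrt (4 * (n : ℝ)))⁻¹ * (1 - 1 / (Real.sqrt (4 * (n : ℝ)) - 1))) := by
  intro Y
  set s := Real.sqrt (4 * (n : ℝ))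
  have hss : s * s = 4 * n := Real.mul_self_sqrt (by positivity)
  have hs2 : 2 ≤ s := by
    rw [show (2 : ℝ) = Real.sqrt 4 by norm_num]
    exact Real.sqrt_le_sqrt (by norm_cast; omega)
  refine ⟨rankOneCorrection_mul_transpose_eq_one (by positivity) (by linarith) (by rwa [hss]),
    fun i j => ?_⟩
  have hwv : w i 0 * v 0 j = 1 ∨ w i 0 * v 0 j = -1 := by
    have hw := hent (.inr i) (.inl 0)
    have hv := hent (.inl 0) (.inr j)
    simp only [fromBlocks_apply₂₁, fromBlocks_apply₁₂] at hw hv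
    rcases hw with hw | hw <;> rcases hv with hv | hv <;> simp [hw, hv]
  have hY : Y i j = s⁻¹ * (D i j + 1 / (s - 1) * (w i 0 * v 0 j)) := by
    show (s⁻¹ • (D + (s - 1)⁻¹ • (w * v))) i j = _
    simp only [Matrix.smul_apply, Matrix.add_apply, mul_apply, Fin.sum_univ_one, smul_eq_mul,
      one_div]
  have hc : 1 / (s - 1) ≤ 1 := by rw [div_le_one (by linarith)]; linarith
  have hc0 : 0 ≤ 1 / (s - 1) := by rw [one_div_nonneg]; linarith
  rw [hY, abs_mul, abs_inv, abs_of_nonneg (by positivity : 0 ≤ s),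
    ← abs_of_nonneg (by linarith : 0 ≤ 1 + 1 / (s - 1)),
    ← abs_of_nonneg (by linarith : 0 ≤ 1 - 1 / (s - 1))]
  exact (abs_add_mul_eq_or (hent (.inr i) (.inr j)) hwv _).imp (congrArg _) (congrArg _)
end

section
/- Let n ≥ 1 be a natural and let H be a real Hadamard matrix of order 4n written in block form H = [[U, V], [W, D]] with U of size 2 × 2, and suppose U satisfies U² = 2U − 2I. Then both Y₁ = (1/√(4n)) · (D − ((√(4n)+2)/(4n+2√(4n)+2))·W·V + (1/(4n+2√(4n)+2))·W·U·V) and Y₂ = (1/√(4n)) · (D + ((√(4ن)−2)/(4n−2√(4n)+2))·W·V + (1/(4n−2√(4n)+2))·W·U·V) are orthogonal matrices of order 4n − 2. -/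
/-!
The ±1 entries and `U² = 2U - 2` force `U = [[1, x], [-x, 1]]`, so `Uᵀ = 2 - U`; then `U`
behaves like the complex number `1 + i`. Reading `H Hᵀ = m` (with `m = 4n`) blockwise gives
`V Vᵀ = m - 2`, `V Dᵀ = -U Wᵀ` and `D Dᵀ = m - W Wᵀ`, so for `Y = D + W P V` with `P = a + b U`
one finds `Y Yᵀ = m + W ((m - 2) P Pᵀ - P U - (P U)ᵀ - 1) Wᵀ`, and the middle factor is the
scalar `(m - 2) |a + b (1 + i)|² - 2a - 1`. The coefficients of `Y₁` and `Y₂` are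
`a = -(t + 2) b`, `b = 1 / (t² + 2t + 2)` for `t = s` and `t = -s` where `s² = m`, and these make
it vanish.
-/

open Matrix

section Blocks

variable {R ι κ : Type*} [CommRing R] [Fintype ι] [Fintype κ] [DecidableEq ι] [DecidableEq κ]

theorem add_mul_mul_mul_transpose_eq_smul_one {U P : Matrix ι ι R} {V : Matrix ι κ R}
    {W : Matrix κ ι R} {D : Matrix κ κ R} {m c : R}
    (hUW : U * Wᵀ + V * Dᵀ = 0) (hWD : W * Wᵀ + D * Dᵀ = m • 1) (hV : V * Vᵀ = c • 1)
    (hP : c • (P * Pᵀ) - P * U - (P * U)ᵀ = 1) :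
    (D + W * P * V) * (D + W * P * V)ᵀ = m • 1 := by
  have hVD : V * Dᵀ = -(U * Wᵀ) := eq_neg_of_add_eq_zero_right hUW
  have hDV : D * Vᵀ = -(W * Uᵀ) := by
    simpa only [transpose_mul, transpose_transpose, transpose_neg] using congrArg transpose hVD
  calc (D + W * P * V) * (D + W * P * V)ᵀ
      = D * Dᵀ + (D * Vᵀ) * Pᵀ * Wᵀ + W * P * (V * Dᵀ) + W * P * (V * Vᵀ) * Pᵀ * Wᵀ := by
        simp only [transpose_add, transpose_mul, add_mul, mul_add, Matrix.mul_assoc]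
        abel
    _ = m • 1 + W * (c • (P * Pᵀ) - P * U - (P * U)ᵀ - 1) * Wᵀ := by
        rw [hDV, hVD, hV, eq_sub_of_add_eq' hWD]
        simp only [transpose_mul, Matrix.sub_mul, Matrix.mul_sub, Matrix.neg_mul, Matrix.mul_neg,
          Matrix.smul_mul, Matrix.mul_smul, Matrix.one_mul, Matrix.mul_assoc]
        abel
    _ = m • 1 := by rw [hP, sub_self, Matrix.mul_zero, Matrix.zero_mul, add_zero]

theorem smul_mul_transpose_sub_mul_sub_transpose {U : Matrix ι ι R} {a b c : R}
    (hUt : Uᵀ = (2 : R) • 1 - U) (hU : U ^ 2 = (2 : R) • U - (2 : R) • 1) :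
    let P := a • 1 + b • U
    c • (P * Pᵀ) - P * U - (P * U)ᵀ = (c * (a ^ 2 + 2 * a * b + 2 * b ^ 2) - 2 * a) • 1 := by
  intro P
  rw [sq] at hU
  simp only [P, transpose_add, transpose_sub, transpose_smul, transpose_one, hUt, Matrix.add_mul,
    Matrix.mul_add, Matrix.mul_sub, Matrix.smul_mul, Matrix.mul_smul, Matrix.one_mul,
    Matrix.mul_one, hU]
  module

end Blocks

theorem transpose_eq_two_smul_one_sub {U : Matrix (Fin 2) (Fin 2) ℝ}
    (hpm : ∀ i j, U i j = 1 ∨ U i j = -1) (hU : U ^ 2 = (2 : ℝ) • U - (2 : ℝ) • 1) :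
    Uᵀ = (2 : ℝ) • 1 - U := by
  have h00 := congrFun₂ hU 0 0
  have h11 := congrFun₂ hU 1 1
  simp only [sq, mul_apply, Fin.sum_univ_two, Matrix.sub_apply, Matrix.smul_apply, one_apply_eq,
    smul_eq_mul] at h00 h11
  have hdiag : U 0 0 = 1 ∧ U 1 1 = 1 ∧ U 1 0 = -U 0 1 := by
    revert h00 h11
    rcases hpm 0 0 with ha | ha <;> rcases hpm 0 1 with hb | hb <;>
      rcases hpm 1 0 with hc | hc <;> rcases hpm 1 1 with hd | hd <;>
      norm_num [ha, hb, hc, hd]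
  ext i j
  fin_cases i <;> fin_cases j <;> simp [hdiag] <;> norm_num

theorem sub_two_mul_sq_add_eq_one_add_two_mul {t m a b : ℝ} (ht : t ^ 2 = m)
    (hb : b * (m + 2 * t + 2) = 1) (ha : a = -(t + 2) * b) :
    (m - 2) * (a ^ 2 + 2 * a * b + 2 * b ^ 2) = 1 + 2 * a := by
  subst ha ht
  linear_combination ((t ^ 2 - 2) * b + 1) * hb

theorem smul_inv_mul_transpose_eq_one {K ι κ : Type*} [Field K] [Fintype ι] [Fintype κ]
    [DecidableEq ι] [DecidableEq κ] {U : Matrix ι ι K} {V : Matrix ι κ K} {W : Matrix κ ι K}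
    {D : Matrix κ κ K} {m s a b : K}
    (hH : fromBlocks U V W D * (fromBlocks U V W D)ᵀ = m • 1)
    (hUt : Uᵀ = (2 : K) • 1 - U) (hU : U ^ 2 = (2 : K) • U - (2 : K) • 1)
    (hs : s ^ 2 = m) (hs0 : s ≠ 0)
    (hab : (m - 2) * (a ^ 2 + 2 * a * b + 2 * b ^ 2) = 1 + 2 * a) :
    (s⁻¹ • (D + a • (W * V) + b • (W * U * V))) *
      (s⁻¹ • (D + a • (W * V) + b • (W * U * V)))ᵀ = 1 := by
  rw [fromBlocks_transpose, fromBlocks_multiply, ← fromBlocks_one, fromBlocks_smul, smul_zero]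
    at hH
  obtain ⟨hUV, hUW, -, hWD⟩ := fromBlocks_inj.mp hH
  have hUU : U * Uᵀ = (2 : K) • 1 := by
    rw [hUt, Matrix.mul_sub, Matrix.mul_smul, Matrix.mul_one, ← sq, hU]
    abel
  have hV : V * Vᵀ = (m - 2) • 1 := by
    rw [eq_sub_of_add_eq' hUV, hUU, sub_smul]
  have hY : D + a • (W * V) + b • (W * U * V) = D + W * (a • 1 + b • U) * V := by
    simp only [Matrix.mul_add, Matrix.add_mul, Matrix.mul_smul, Matrix.smul_mul, Matrix.mul_one,
      add_assoc]
  have hP := smul_mul_transpose_sub_mul_sub_transpose (a := a) (b := b) (c := m - 2) hUt hU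
  rw [hab, add_sub_cancel_right, one_smul] at hP
  rw [hY, transpose_smul, Matrix.smul_mul, Matrix.mul_smul, smul_smul,
    add_mul_mul_mul_transpose_eq_smul_one hUW hWD hV hP, smul_smul, ← hs, ← sq, ← mul_pow,
    inv_mul_cancel₀ hs0, one_pow, one_smul]

theorem stmt_10 (n : ℕ) (hn : 1 ≤ n)
    (U : Matrix (Fin 2) (Fin 2) ℝ) (V : Matrix (Fin 2) (Fin (4 * n - 2)) ℝ)
    (W : Matrix (Fin (4 * n - 2)) (Fin 2) ℝ)
    (D : Matrix (Fin (4 * n - 2)) (Fin (4 * n - 2)) ℝ)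
    (hent : ∀ i j, Matrix.fromBlocks U V W D i j = 1 ∨ Matrix.fromBlocks U V W D i j = -1)
    (hH : Matrix.fromBlocks U V W D * (Matrix.fromBlocks U V W D)ᵀ
            = (4 * (n : ℝ)) • 1)
    (hU : U ^ 2 = (2 : ℝ) • U - (2 : ℝ) • (1 : Matrix (Fin 2) (Fin 2) ℝ)) :
    (let s := Real.sqrt (4 * (n : ℝ));
     let Y₁ := s⁻¹ • (D - ((s + 2) / (4 * (n : ℝ) + 2 * s + 2)) • (W * V)
        + (1 / (4 * (n : ℝ) + 2 * s + 2)) • (W * U * V));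
     let Y₂ := s⁻¹ • (D + ((s - 2) / (4 * (n : ℝ) - 2 * s + 2)) • (W * V)
        + (1 / (4 * (n : ℝ) - 2 * s + 2)) • (W * U * V));
     Y₁ * Y₁ᵀ = 1 ∧ Y₂ * Y₂ᵀ = 1) := by
  intro s Y₁ Y₂
  have hs : s ^ 2 = 4 * n := Real.sq_sqrt (by positivity)
  have hs0 : s ≠ 0 := Real.sqrt_ne_zero'.mpr (by positivity)
  have hUt := transpose_eq_two_smul_one_sub (U := U) (fun i j ↦ hent (.inl i) (.inl j)) hU
  have hd₁ : 4 * (n : ℝ) + 2 * s + 2 ≠ 0 := by positivity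
  have hd₂ : 4 * (n : ℝ) - 2 * s + 2 ≠ 0 := by nlinarith [sq_nonneg (s - 1)]
  constructor
  · simp only [Y₁, sub_eq_add_neg, ← neg_smul]
    refine smul_inv_mul_transpose_eq_one hH hUt hU hs hs0
      (sub_two_mul_sq_add_eq_one_add_two_mul hs ?_ ?_)
    · exact one_div_mul_cancel hd₁
    · ring
  · refine smul_inv_mul_transpose_eq_one hH hUt hU hs hs0
      (sub_two_mul_sq_add_eq_one_add_two_mul (t := -s) (by rw [neg_sq, hs]) ?_ ?_)
    · rw [one_div_mul_eq_div, div_eq_one_iff_eq hd₂]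
      ring
    · ring
end

section
/- Let n ≥ 1 be a natural and let H be a real Hadamard matrix of order 4n written in block form H = [[U, V], [W, D]] with U of size 2 × 2, and suppose U satisfies U² = −2U − 2I. Then both Y₁ = (1/√(4n)) · (D − ((√(4n)−2)/(4n−2√(4n)+2))·W·V + (1/(4n−2√(4n)+2))·W·U·V) and Y₂ = (1/√(4n)) · (D + ((√(4n)+2)/(4n+2√(4n)+2))·W·V + (1/(4n+2√(4n)+2))·W·U·V) are orthogonal matrices of order 4n − 2. -/
/-!
Since `(U + 1)² = -1` and `U` has entries `±1`, `U = [[-1, b], [-b, -1]]`; hence `Uᵀ = -U - 2`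
and the matrices `α + βU` behave like complex numbers with transposition as conjugation.
The blocks of `H Hᵀ = 4n` give `V Vᵀ = 4n - 2`, `D Vᵀ = -W Uᵀ` and `D Dᵀ = 4n - W Wᵀ`, so for
`A = α + βU` one gets `(D + WAV)(D + WAV)ᵀ = D Dᵀ - W (AU + (AU)ᵀ - (4n - 2) A Aᵀ) Wᵀ`, where the
bracket is the scalar `-2α - (4n - 2)(α² - 2αβ + 2β²)`. Both choices of `(α, β)` make it `-1`;
in fact `Y₂` is `-Y₁` with `√(4n)` replaced by `-√(4n)`.
-/

open Matrix

theorem transpose_eq_neg_sub_two_smul_one {U : Matrix (Fin 2) (Fin 2) ℝ}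
    (hU : ∀ i j, U i j = 1 ∨ U i j = -1) (hU2 : U * U = -((2 : ℝ) • U) - (2 : ℝ) • 1) :
    Uᵀ = -U - (2 : ℝ) • 1 := by
  have h00 := congrFun₂ hU2 0 0
  have h11 := congrFun₂ hU2 1 1
  simp only [mul_apply, Fin.sum_univ_two, Matrix.sub_apply, Matrix.neg_apply,
    Matrix.smul_apply, smul_eq_mul, one_apply_eq] at h00 h11
  obtain ⟨ha, hd, hcb⟩ : U 0 0 = -1 ∧ U 1 1 = -1 ∧ U 1 0 = -U 0 1 := by
    revert h00 h11
    rcases hU 0 0 with a | a <;> rcases hU 0 1 with b | b <;> rcases hU 1 0 with c | c <;>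
      rcases hU 1 1 with d | d <;> norm_num [a, b, c, d]
  ext i j
  fin_cases i <;> fin_cases j <;> norm_num [ha, hd, hcb]

section

variable {k l : Type*} [Fintype k] [Fintype l] [DecidableEq l]

theorem add_mul_mul_mul_transpose_self {R : Type*} [CommRing R] {U : Matrix l l R}
    {V : Matrix l k R} {W : Matrix k l R} {D : Matrix k k R} {c : R} (A : Matrix l l R)
    (hVV : V * Vᵀ = c • 1) (hDV : D * Vᵀ = -(W * Uᵀ)) :
    (D + W * A * V) * (D + W * A * V)ᵀ
      = D * Dᵀ - W * (A * U + (A * U)ᵀ - c • (A * Aᵀ)) * Wᵀ := by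
  have hVD : V * Dᵀ = -(U * Wᵀ) := by simpa using congrArg transpose hDV
  have hVVA : V * (Vᵀ * (Aᵀ * Wᵀ)) = c • (Aᵀ * Wᵀ) := by
    rw [← Matrix.mul_assoc, hVV, Matrix.smul_mul, Matrix.one_mul]
  simp only [transpose_add, transpose_mul, Matrix.add_mul, Matrix.mul_add, Matrix.sub_mul,
    Matrix.mul_sub, Matrix.smul_mul, Matrix.mul_smul, Matrix.mul_assoc, hVD, hVVA,
    ← Matrix.mul_assoc D, hDV]
  simp only [Matrix.mul_assoc, Matrix.mul_neg, Matrix.neg_mul]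
  abel

theorem mul_add_transpose_sub_smul_mul_transpose {R : Type*} [CommRing R] {U : Matrix l l R}
    (hU2 : U * U = -((2 : R) • U) - (2 : R) • 1) (hUt : Uᵀ = -U - (2 : R) • 1) (α β c : R) :
    (α • 1 + β • U) * U + ((α • 1 + β • U) * U)ᵀ - c • ((α • 1 + β • U) * (α • 1 + β • U)ᵀ)
      = (-2 * α - c * (α ^ 2 - 2 * α * β + 2 * β ^ 2)) • 1 := by
  simp only [transpose_add, transpose_sub, transpose_neg, transpose_smul, transpose_one, hUt,
    Matrix.add_mul, Matrix.mul_add, Matrix.mul_sub, Matrix.smul_mul, Matrix.mul_smul,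
    Matrix.one_mul, Matrix.mul_one, Matrix.mul_neg, hU2]
  module

theorem inv_smul_sub_add_mul_transpose_self_eq_one [DecidableEq k] {U : Matrix l l ℝ}
    {V : Matrix l k ℝ} {W : Matrix k l ℝ} {D : Matrix k k ℝ} {m : ℝ}
    (hU2 : U * U = -((2 : ℝ) • U) - (2 : ℝ) • 1) (hUt : Uᵀ = -U - (2 : ℝ) • 1)
    (hVV : V * Vᵀ = (m - 2) • 1) (hDV : D * Vᵀ = -(W * Uᵀ)) (hDD : D * Dᵀ = m • 1 - W * Wᵀ)
    {t : ℝ} (ht : t * t = m) (ht0 : t ≠ 0) :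
    (t⁻¹ • (D - ((t - 2) / (m - 2 * t + 2)) • (W * V) + (1 / (m - 2 * t + 2)) • (W * U * V))) *
      (t⁻¹ • (D - ((t - 2) / (m - 2 * t + 2)) • (W * V) + (1 / (m - 2 * t + 2)) • (W * U * V)))ᵀ
      = 1 := by
  subst ht
  set d := t * t - 2 * t + 2 with hd_def
  have hd : d ≠ 0 := by nlinarith [sq_nonneg (t - 1)]
  have hY : D - ((t - 2) / d) • (W * V) + (1 / d) • (W * U * V)
      = D + W * ((-(t - 2) / d) • 1 + (1 / d) • U) * V := by
    simp only [Matrix.mul_add, Matrix.add_mul, Matrix.mul_smul, Matrix.smul_mul, Matrix.mul_one]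
    module
  have hcoef : -2 * (-(t - 2) / d) - (t * t - 2) * ((-(t - 2) / d) ^ 2
      - 2 * (-(t - 2) / d) * (1 / d) + 2 * (1 / d) ^ 2) = -1 := by
    field_simp
    rw [hd_def]
    ring
  rw [hY, transpose_smul, Matrix.smul_mul, Matrix.mul_smul, smul_smul,
    add_mul_mul_mul_transpose_self _ hVV hDV,
    mul_add_transpose_sub_smul_mul_transpose hU2 hUt, hcoef, hDD, neg_one_smul, Matrix.mul_neg,
    Matrix.neg_mul, Matrix.mul_one, sub_neg_eq_add, sub_add_cancel, smul_smul,
    ← mul_mul_mul_comm, inv_mul_cancel₀ ht0, one_mul, one_smul]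

end

theorem stmt_11 (n : ℕ) (hn : 1 ≤ n)
    (U : Matrix (Fin 2) (Fin 2) ℝ) (V : Matrix (Fin 2) (Fin (4 * n - 2)) ℝ)
    (W : Matrix (Fin (4 * n - 2)) (Fin 2) ℝ)
    (D : Matrix (Fin (4 * n - 2)) (Fin (4 * n - 2)) ℝ)
    (hent : ∀ i j, Matrix.fromBlocks U V W D i j = 1 ∨ Matrix.fromBlocks U V W D i j = -1)
    (hH : Matrix.fromBlocks U V W D * (Matrix.fromBlocks U V W D)ᵀ
            = (4 * (n : ℝ)) • 1)
    (hU : U ^ 2 = -((2 : ℝ) • U) - (2 : ℝ) • (1 : Matrix (Fin 2) (Fin 2) ℝ)) :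
    (let s := Real.sqrt (4 * (n : ℝ));
     let Y₁ := s⁻¹ • (D - ((s - 2) / (4 * (n : ℝ) - 2 * s + 2)) • (W * V)
        + (1 / (4 * (n : ℝ) - 2 * s + 2)) • (W * U * V));
     let Y₂ := s⁻¹ • (D + ((s + 2) / (4 * (n : ℝ) + 2 * s + 2)) • (W * V)
        + (1 / (4 * (n : ℝ) + 2 * s + 2)) • (W * U * V));
     Y₁ * Y₁ᵀ = 1 ∧ Y₂ * Y₂ᵀ = 1) := by
  intro s Y₁ Y₂
  have hs : s * s = 4 * n := Real.mul_self_sqrt (by positivity)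
  have hs0 : s ≠ 0 := Real.sqrt_ne_zero'.2 (by norm_num; omega)
  rw [sq] at hU
  have hUt := transpose_eq_neg_sub_two_smul_one (U := U) (fun i j ↦ hent (.inl i) (.inl j)) hU
  rw [fromBlocks_transpose, fromBlocks_multiply, ← fromBlocks_one, fromBlocks_smul,
    fromBlocks_inj] at hH
  obtain ⟨hUV, -, hWU, hWD⟩ := hH
  rw [smul_zero] at hWU
  have hVV : V * Vᵀ = (4 * n - 2 : ℝ) • 1 := by
    rw [eq_sub_of_add_eq' hUV, hUt, Matrix.mul_sub, Matrix.mul_neg, hU, Matrix.mul_smul,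
      Matrix.mul_one]
    module
  have hY {t : ℝ} (ht : t * t = 4 * n) (ht0 : t ≠ 0) :=
    inv_smul_sub_add_mul_transpose_self_eq_one hU hUt hVV (eq_neg_of_add_eq_zero_right hWU)
      (eq_sub_of_add_eq' hWD) ht ht0
  refine ⟨hY hs hs0, ?_⟩
  have hY₂ : Y₂ = -((-s)⁻¹ • (D - ((-s - 2) / (4 * n - 2 * -s + 2)) • (W * V)
      + (1 / (4 * n - 2 * -s + 2)) • (W * U * V))) := by
    simp only [Y₂]
    module
  rw [hY₂, transpose_neg, neg_mul_neg]
  exact hY (by rw [neg_mul_neg, hs]) (neg_ne_zero.2 hs0)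
end

section
/- Let n ≥ 2 be a natural and let H be a real Hadamard matrix of order 4n written in block form H = [[U, V], [W, D]] with U of size 3 × 3, and suppose U satisfies U³ = −U² + 4U + 4I. Set Δ₁ = 4n√(4n) − 4n − 4√(4n) + 4 and Δ₂ = 4n√(4n) + 4n − 4√(4n) − 4. Then both Y₁ = (1/√(4n)) · (D − ((4n−√(4n)−4)/Δ₁)·W·V + ((√(4n)−1)/Δ₁)·W·U·V − (1/Δ₁)·W·U²·V) and Y₂ = (1/√(4n)) · (D + ((4n+√(4n)−4)/Δ₂)·W·V + ((√(4n)+1)/Δ₂)·W·U·V + (1/Δ₂)·W·U²·V) are orthogonal matrices of order 4n − 3. -/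
/-!
With `m = 4n` and `s = √m`, the Hadamard condition `H Hᵀ = m I` splits into block identities, and
for any `P` with `P (εI - U) = 1`, where `ε² = m`, these identities force
`(D + W P V)(D + W P V)ᵀ = m I`. The cubic says `U` is annihilated by
`p(x) = x³ + x² - 4x - 4 = (x + 1)(x - 2)(x + 2)`, so `(εI - U)⁻¹ = q(ε, U) / p(ε)` with
`q(ε, x) = (p(ε) - p(x)) / (ε - x)`, which is legitimate as soon as `ε ≠ -1, ±2`.
The two matrices of the theorem are `s⁻¹ (D + W (εI - U)⁻¹ V)` for `ε = -s` (then `p(ε) = -Δ₁`)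
and for `ε = s` (then `p(ε) = Δ₂`).
-/

open Matrix

section Blocks

variable {R : Type*} [CommRing R] {k l : Type*} [Fintype k] [Fintype l] [DecidableEq k]
  [DecidableEq l]

theorem fromBlocks_mul_transpose_self_eq_smul_one_iff (m : R) (A : Matrix k k R)
    (B : Matrix k l R) (C : Matrix l k R) (D : Matrix l l R) :
    fromBlocks A B C D * (fromBlocks A B C D)ᵀ = m • 1 ↔
      A * Aᵀ + B * Bᵀ = m • 1 ∧ A * Cᵀ + B * Dᵀ = 0 ∧ C * Aᵀ + D * Bᵀ = 0 ∧
        C * Cᵀ + D * Dᵀ = m • 1 := by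
  rw [fromBlocks_transpose, fromBlocks_multiply, ← fromBlocks_one, fromBlocks_smul, smul_zero,
    smul_zero, fromBlocks_inj]

theorem add_mul_mul_mul_transpose_self_s12 {A P : Matrix k k R} {B : Matrix k l R}
    {C : Matrix l k R} {D : Matrix l l R} {ε : R}
    (hH : fromBlocks A B C D * (fromBlocks A B C D)ᵀ = (ε * ε) • 1)
    (hP : P * (ε • 1 - A) = 1) :
    (D + C * P * B) * (D + C * P * B)ᵀ = (ε * ε) • 1 := by
  obtain ⟨hAB, hAD, hCB, hCD⟩ := (fromBlocks_mul_transpose_self_eq_smul_one_iff _ _ _ _ _).1 hH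
  have hPA : P * A = ε • P - 1 := calc
    _ = ε • P - P * (ε • 1 - A) := by rw [mul_sub, mul_smul_comm, mul_one, sub_sub_cancel]
    _ = ε • P - 1 := by rw [hP]
  have hmid : P * B * Bᵀ * Pᵀ - P * A - (P * A)ᵀ = 1 := calc
    _ = P * ((ε * ε) • 1 - A * Aᵀ) * Pᵀ - P * A - (P * A)ᵀ := by
      rw [← eq_sub_of_add_eq' hAB, Matrix.mul_assoc P]
    _ = (ε * ε) • (P * Pᵀ) - P * A * (P * A)ᵀ - P * A - (P * A)ᵀ := by
      simp only [transpose_mul, Matrix.mul_sub, Matrix.sub_mul, Matrix.mul_smul,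
        Matrix.smul_mul, Matrix.mul_one, Matrix.mul_assoc]
    _ = 1 := by
      rw [hPA]
      simp only [transpose_sub, transpose_smul, transpose_one, Matrix.sub_mul, Matrix.mul_sub,
        Matrix.smul_mul, Matrix.mul_smul, Matrix.one_mul, Matrix.mul_one]
      module
  calc
    _ = D * Dᵀ + D * Bᵀ * (C * P)ᵀ + C * P * (B * Dᵀ) + C * P * B * Bᵀ * (C * P)ᵀ := by
      simp only [transpose_add, transpose_mul, Matrix.add_mul, Matrix.mul_add, Matrix.mul_assoc]
      abel
    _ = C * Cᵀ + D * Dᵀ + C * (P * B * Bᵀ * Pᵀ - P * A - (P * A)ᵀ) * Cᵀ - C * Cᵀ := by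
      rw [eq_neg_of_add_eq_zero_right hCB, eq_neg_of_add_eq_zero_right hAD]
      simp only [transpose_mul, Matrix.mul_sub, Matrix.sub_mul, Matrix.mul_neg,
        Matrix.neg_mul, Matrix.mul_assoc]
      abel
    _ = (ε * ε) • 1 := by rw [hmid, hCD, Matrix.mul_one, add_sub_cancel_right]

end Blocks

theorem mul_smul_one_sub_eq_one_of_cubic {K A : Type*} [Field K] [Ring A] [Algebra K A] {u : A}
    (hu : u ^ 3 = -(u ^ 2) + (4 : K) • u + (4 : K) • 1) {ε : K}
    (hε : ε ^ 3 + ε ^ 2 - 4 * ε - 4 ≠ 0) :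
    ((ε ^ 3 + ε ^ 2 - 4 * ε - 4)⁻¹ • (u ^ 2 + (ε + 1) • u + (ε ^ 2 + ε - 4) • 1)) *
      (ε • 1 - u) = 1 := by
  have h3 : u ^ 2 * u = u ^ 3 := (pow_succ u 2).symm
  have hq : (u ^ 2 + (ε + 1) • u + (ε ^ 2 + ε - 4) • 1) * (ε • 1 - u) =
      (ε ^ 3 + ε ^ 2 - 4 * ε - 4) • 1 := by
    simp only [mul_sub, add_mul, smul_mul_assoc, mul_smul_comm, one_mul, mul_one, h3, ← sq, hu]
    module
  rw [smul_mul_assoc, hq, smul_smul, inv_mul_cancel₀ hε, one_smul]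

theorem inv_smul_mul_transpose_inv_smul {K k l : Type*} [Field K] [Fintype k] [DecidableEq l]
    {X : Matrix l k K} {s : K} (hs : s ≠ 0) (hX : X * Xᵀ = (s * s) • 1) :
    (s⁻¹ • X) * (s⁻¹ • X)ᵀ = 1 := by
  rw [transpose_smul, Matrix.smul_mul, Matrix.mul_smul, hX, smul_smul, smul_smul]
  convert one_smul K (1 : Matrix l l K)
  field_simp

theorem inv_smul_add_mul_mul_mul_transpose_self_of_cubic {K k l : Type*} [Field K] [Fintype k]
    [Fintype l] [DecidableEq k] [DecidableEq l] {U : Matrix k k K} {V : Matrix k l K}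
    {W : Matrix l k K} {D : Matrix l l K} {s ε : K}
    (hH : fromBlocks U V W D * (fromBlocks U V W D)ᵀ = (s * s) • 1)
    (hU : U ^ 3 = -(U ^ 2) + (4 : K) • U + (4 : K) • 1) (hs : s ≠ 0) (hε : ε * ε = s * s)
    (hp : ε ^ 3 + ε ^ 2 - 4 * ε - 4 ≠ 0) {Y : Matrix l l K}
    (hY : Y = s⁻¹ • (D + W * ((ε ^ 3 + ε ^ 2 - 4 * ε - 4)⁻¹ •
      (U ^ 2 + (ε + 1) • U + (ε ^ 2 + ε - 4) • 1)) * V)) :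
    Y * Yᵀ = 1 := by
  subst hY
  refine inv_smul_mul_transpose_inv_smul hs ?_
  rw [← hε] at hH ⊢
  exact add_mul_mul_mul_transpose_self_s12 hH (mul_smul_one_sub_eq_one_of_cubic hU hp)

theorem stmt_12_general (n : ℕ) (hn : 2 ≤ n)
    (U : Matrix (Fin 3) (Fin 3) ℝ) (V : Matrix (Fin 3) (Fin (4 * n - 3)) ℝ)
    (W : Matrix (Fin (4 * n - 3)) (Fin 3) ℝ)
    (D : Matrix (Fin (4 * n - 3)) (Fin (4 * n - 3)) ℝ)
    (hH : Matrix.fromBlocks U V W D * (Matrix.fromBlocks U V W D)ᵀ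
            = (4 * (n : ℝ)) • 1)
    (hU : U ^ 3 = -(U ^ 2) + (4 : ℝ) • U + (4 : ℝ) • (1 : Matrix (Fin 3) (Fin 3) ℝ)) :
    (let s := Real.sqrt (4 * (n : ℝ));
     let Δ₁ := 4 * (n : ℝ) * s - 4 * (n : ℝ) - 4 * s + 4;
     let Δ₂ := 4 * (n : ℝ) * s + 4 * (n : ℝ) - 4 * s - 4;
     let Y₁ := s⁻¹ • (D - ((4 * (n : ℝ) - s - 4) / Δ₁) • (W * V)
        + ((s - 1) / Δ₁) • (W * U * V) - (1 / Δ₁) • (W * U ^ 2 * V));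
     let Y₂ := s⁻¹ • (D + ((4 * (n : ℝ) + s - 4) / Δ₂) • (W * V)
        + ((s + 1) / Δ₂) • (W * U * V) + (1 / Δ₂) • (W * U ^ 2 * V));
     Y₁ * Y₁ᵀ = 1 ∧ Y₂ * Y₂ᵀ = 1) := by
  intro s Δ₁ Δ₂ Y₁ Y₂
  have hn' : (2 : ℝ) ≤ n := by exact_mod_cast hn
  have hs : s * s = 4 * n := Real.mul_self_sqrt (by positivity)
  have hs_gt : 2 < s := by nlinarith [Real.sqrt_nonneg (4 * (n : ℝ))]
  have hΔ₁ : Δ₁ ≠ 0 := by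
    rw [show Δ₁ = (4 * n - 4) * (s - 1) by ring]; exact mul_ne_zero (by linarith) (by linarith)
  have hΔ₂ : Δ₂ ≠ 0 := by
    rw [show Δ₂ = (4 * n - 4) * (s + 1) by ring]; exact mul_ne_zero (by linarith) (by linarith)
  have hp₁ : (-s) ^ 3 + (-s) ^ 2 - 4 * -s - 4 = -Δ₁ := by linear_combination (1 - s) * hs
  have hp₂ : s ^ 3 + s ^ 2 - 4 * s - 4 = Δ₂ := by linear_combination (s + 1) * hs
  rw [← hs] at hH
  constructor
  · refine inv_smul_add_mul_mul_mul_transpose_self_of_cubic hH hU (by positivity)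
      (neg_mul_neg s s) (hp₁ ▸ neg_ne_zero.2 hΔ₁) ?_
    simp only [Y₁, hp₁, Δ₁, ← hs, Matrix.mul_smul, Matrix.smul_mul, Matrix.mul_add,
      Matrix.add_mul, Matrix.mul_one, Matrix.mul_assoc]
    match_scalars <;> field_simp <;> ring
  · refine inv_smul_add_mul_mul_mul_transpose_self_of_cubic hH hU (by positivity)
      rfl (hp₂ ▸ hΔ₂) ?_
    simp only [Y₂, hp₂, Δ₂, ← hs, Matrix.mul_smul, Matrix.smul_mul, Matrix.mul_add,
      Matrix.add_mul, Matrix.mul_one, Matrix.mul_assoc]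
    match_scalars <;> field_simp

theorem stmt_12 (n : ℕ) (hn : 2 ≤ n)
    (U : Matrix (Fin 3) (Fin 3) ℝ) (V : Matrix (Fin 3) (Fin (4 * n - 3)) ℝ)
    (W : Matrix (Fin (4 * n - 3)) (Fin 3) ℝ)
    (D : Matrix (Fin (4 * n - 3)) (Fin (4 * n - 3)) ℝ)
    (hent : ∀ i j, Matrix.fromBlocks U V W D i j = 1 ∨ Matrix.fromBlocks U V W D i j = -1)
    (hH : Matrix.fromBlocks U V W D * (Matrix.fromBlocks U V W D)ᵀ
            = (4 * (n : ℝ)) • 1)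
    (hU : U ^ 3 = -(U ^ 2) + (4 : ℝ) • U + (4 : ℝ) • (1 : Matrix (Fin 3) (Fin 3) ℝ)) :
    (let s := Real.sqrt (4 * (n : ℝ));
     let Δ₁ := 4 * (n : ℝ) * s - 4 * (n : ℝ) - 4 * s + 4;
     let Δ₂ := 4 * (n : ℝ) * s + 4 * (n : ℝ) - 4 * s - 4;
     let Y₁ := s⁻¹ • (D - ((4 * (n : ℝ) - s - 4) / Δ₁) • (W * V)
        + ((s - 1) / Δ₁) • (W * U * V) - (1 / Δ₁) • (W * U ^ 2 * V));
     let Y₂ := s⁻¹ • (D + ((4 * (n : ℝ) + s - 4) / Δ₂) • (W * V)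
        + ((s + 1) / Δ₂) • (W * U * V) + (1 / Δ₂) • (W * U ^ 2 * V));
     Y₁ * Y₁ᵀ = 1 ∧ Y₂ * Y₂ᵀ = 1) :=
  stmt_12_general n hn U V W D hH hU
end

section
/- Let n ≥ 2 be a natural and let H be a real Hadamard matrix of order 4n written in block form H = [[U, V], [W, D]] with U of size 3 × 3, and suppose U satisfies U³ = U² + 4U − 4I. Set Δ₁ = 4n√(4n) − 4n − 4√(4n) + 4 and Δ₂ = 4n√(4n) + 4n − 4√(4n) − 4. Then both Y₁ = (1/√(4n)) · (D − ((4n+√(4n)−4)/Δ₂)·W·V + ((√(4n)+1)/Δ₂)·W·U·V − (1/Δ₂)·W·U²·V) and Y₂ = (1/√(4n)) · (D + ((4n−√(4n)−4)/Δ₁)·W·V + ((√(4n)−1)/Δ₁)·W·U·V + (1/Δ₁)·W·U²·V) are orthogonal matrices of order 4n − 3. -/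
/-!
Write `H = [[U, V], [W, D]]` with `H Hᵀ = c` and let `P` satisfy `P (U + t) = 1` where `t² = c`.
For `L = [-W P | 1]` one has `L H = [t W P | D - W P V]`, so comparing `(L H)(L H)ᵀ` with
`L (H Hᵀ) Lᵀ = c L Lᵀ` gives `(D - W P V)(D - W P V)ᵀ = c`.
Since `U` is annihilated by `x³ - x² - 4x + 4 = (x - 1)(x - 2)(x + 2)`, dividing this cubic by
`x + t` writes `(U + t)⁻¹` as a quadratic polynomial in `U` whenever `t ∉ {-1, 2, -2}`.
Taking `c = 4n` and `t = ±√(4n)` yields `Y₁` and `Y₂`.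
-/

open Matrix

section

variable {K m : Type*} [Field K] [Fintype m] [DecidableEq m]

noncomputable def invAddSmulOne (U : Matrix m m K) (t : K) : Matrix m m K :=
  (t ^ 3 + t ^ 2 - 4 * t - 4)⁻¹ • (U ^ 2 - (t + 1) • U + (t ^ 2 + t - 4) • 1)

theorem invAddSmulOne_mul {U : Matrix m m K} (hU : U ^ 3 = U ^ 2 + (4 : K) • U - (4 : K) • 1)
    {t : K} (ht : t ^ 3 + t ^ 2 - 4 * t - 4 ≠ 0) :
    invAddSmulOne U t * (U + t • 1) = 1 := by
  have hquot : (U ^ 2 - (t + 1) • U + (t ^ 2 + t - 4) • 1) * (U + t • 1)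
      = (t ^ 3 + t ^ 2 - 4 * t - 4) • (1 : Matrix m m K) := by
    simp only [Matrix.sub_mul, Matrix.add_mul, Matrix.mul_add, Matrix.smul_mul, Matrix.mul_smul,
      Matrix.one_mul, Matrix.mul_one, ← pow_succ, hU]
    rw [← sq]
    module
  rw [invAddSmulOne, Matrix.smul_mul, hquot, smul_smul, inv_mul_cancel₀ ht, one_smul]

theorem mul_invAddSmulOne_mul {k : Type*} (U : Matrix m m K) (V : Matrix m k K)
    (W : Matrix k m K) (t : K) :
    W * invAddSmulOne U t * V = (t ^ 3 + t ^ 2 - 4 * t - 4)⁻¹ •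
      (W * U ^ 2 * V - (t + 1) • (W * U * V) + (t ^ 2 + t - 4) • (W * V)) := by
  simp only [invAddSmulOne, Matrix.mul_smul, Matrix.smul_mul, Matrix.mul_add, Matrix.mul_sub,
    Matrix.add_mul, Matrix.sub_mul, Matrix.mul_one]

end

section

variable {m k : Type*} [Fintype m] [DecidableEq m] [Fintype k] [DecidableEq k]

theorem sub_mul_mul_mul_transpose_self_of_fromBlocks {R : Type*} [CommRing R] {c t : R}
    (ht : t * t = c) {U : Matrix m m R} {V : Matrix m k R} {W : Matrix k m R} {D : Matrix k k R}
    (hH : fromBlocks U V W D * (fromBlocks U V W D)ᵀ = c • 1)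
    {P : Matrix m m R} (hP : P * (U + t • 1) = 1) :
    (D - W * P * V) * (D - W * P * V)ᵀ = c • 1 := by
  set L : Matrix k (m ⊕ k) R := fromCols (-(W * P)) 1
  have hLH : L * fromBlocks U V W D = fromCols (t • (W * P)) (D - W * P * V) := by
    have hW : W * P * U + t • (W * P) = W := by
      simpa only [Matrix.mul_add, Matrix.mul_smul, Matrix.mul_one, Matrix.mul_assoc] using
        congrArg (W * ·) hP
    have hPU : -(W * P * U) + W = t • (W * P) := by
      nth_rw 2 [← hW]
      abel
    rw [fromCols_mul_fromBlocks, Matrix.neg_mul, Matrix.neg_mul, Matrix.one_mul, Matrix.one_mul,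
      hPU, neg_add_eq_sub]
  have key : (L * fromBlocks U V W D) * (L * fromBlocks U V W D)ᵀ = c • (L * Lᵀ) := by
    rw [transpose_mul, Matrix.mul_assoc, ← Matrix.mul_assoc (fromBlocks U V W D), hH,
      Matrix.smul_mul, Matrix.one_mul, Matrix.mul_smul]
  rw [hLH, transpose_fromCols, fromCols_mul_fromRows, transpose_fromCols,
    fromCols_mul_fromRows, transpose_smul, Matrix.smul_mul, Matrix.mul_smul, smul_smul, ht,
    transpose_neg, Matrix.neg_mul, Matrix.mul_neg, neg_neg, transpose_one, Matrix.one_mul,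
    smul_add] at key
  exact add_left_cancel key

theorem inv_smul_sub_mul_mul_mul_transpose_self_of_fromBlocks {K : Type*} [Field K] {s t : K}
    (hs : s ≠ 0) (ht : t * t = s * s)
    {U : Matrix m m K} {V : Matrix m k K} {W : Matrix k m K} {D : Matrix k k K}
    (hH : fromBlocks U V W D * (fromBlocks U V W D)ᵀ = (s * s) • 1)
    {P : Matrix m m K} (hP : P * (U + t • 1) = 1) :
    (s⁻¹ • (D - W * P * V)) * (s⁻¹ • (D - W * P * V))ᵀ = 1 := by
  rw [transpose_smul, Matrix.smul_mul, Matrix.mul_smul,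
    sub_mul_mul_mul_transpose_self_of_fromBlocks ht hH hP, smul_smul, smul_smul,
    show s⁻¹ * s⁻¹ * (s * s) = 1 by field_simp, one_smul]

end

theorem stmt_13_general (n : ℕ) (hn : 2 ≤ n)
    (U : Matrix (Fin 3) (Fin 3) ℝ) (V : Matrix (Fin 3) (Fin (4 * n - 3)) ℝ)
    (W : Matrix (Fin (4 * n - 3)) (Fin 3) ℝ)
    (D : Matrix (Fin (4 * n - 3)) (Fin (4 * n - 3)) ℝ)
    (hH : Matrix.fromBlocks U V W D * (Matrix.fromBlocks U V W D)ᵀ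
            = (4 * (n : ℝ)) • 1)
    (hU : U ^ 3 = U ^ 2 + (4 : ℝ) • U - (4 : ℝ) • (1 : Matrix (Fin 3) (Fin 3) ℝ)) :
    (let s := Real.sqrt (4 * (n : ℝ));
     let Δ₁ := 4 * (n : ℝ) * s - 4 * (n : ℝ) - 4 * s + 4;
     let Δ₂ := 4 * (n : ℝ) * s + 4 * (n : ℝ) - 4 * s - 4;
     let Y₁ := s⁻¹ • (D - ((4 * (n : ℝ) + s - 4) / Δ₂) • (W * V)
        + ((s + 1) / Δ₂) • (W * U * V) - (1 / Δ₂) • (W * U ^ 2 * V));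
     let Y₂ := s⁻¹ • (D + ((4 * (n : ℝ) - s - 4) / Δ₁) • (W * V)
        + ((s - 1) / Δ₁) • (W * U * V) + (1 / Δ₁) • (W * U ^ 2 * V));
     Y₁ * Y₁ᵀ = 1 ∧ Y₂ * Y₂ᵀ = 1) := by
  intro s Δ₁ Δ₂ Y₁ Y₂
  have hs2 : s * s = 4 * n := Real.mul_self_sqrt (by positivity)
  have hs : 2 < s := by
    rw [Real.lt_sqrt zero_le_two]
    exact_mod_cast (by omega : 2 ^ 2 < 4 * n)
  have hn' : (2 : ℝ) ≤ n := by exact_mod_cast hn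
  have hΔ₁pos : 0 < Δ₁ := by simp only [Δ₁]; nlinarith
  have hΔ₂pos : 0 < Δ₂ := by simp only [Δ₂]; nlinarith
  have hΔ₁ : (-s) ^ 3 + (-s) ^ 2 - 4 * -s - 4 = -Δ₁ := by simp only [Δ₁, ← hs2]; ring
  have hΔ₂ : s ^ 3 + s ^ 2 - 4 * s - 4 = Δ₂ := by simp only [Δ₂, ← hs2]; ring
  have hY₁ : Y₁ = s⁻¹ • (D - W * invAddSmulOne U s * V) := by
    simp only [Y₁, mul_invAddSmulOne_mul, hΔ₂, ← hs2]
    congr 1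
    match_scalars <;> field_simp
  have hY₂ : Y₂ = s⁻¹ • (D - W * invAddSmulOne U (-s) * V) := by
    simp only [Y₂, mul_invAddSmulOne_mul, hΔ₁, ← hs2]
    congr 1
    match_scalars <;> field_simp <;> ring
  rw [← hs2] at hH
  have hs0 : s ≠ 0 := (zero_lt_two.trans hs).ne'
  exact ⟨hY₁ ▸ inv_smul_sub_mul_mul_mul_transpose_self_of_fromBlocks hs0 rfl hH
      (invAddSmulOne_mul hU (hΔ₂ ▸ hΔ₂pos.ne')),
    hY₂ ▸ inv_smul_sub_mul_mul_mul_transpose_self_of_fromBlocks hs0 (neg_mul_neg s s) hH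
      (invAddSmulOne_mul hU (hΔ₁ ▸ neg_ne_zero.mpr hΔ₁pos.ne'))⟩

theorem stmt_13 (n : ℕ) (hn : 2 ≤ n)
    (U : Matrix (Fin 3) (Fin 3) ℝ) (V : Matrix (Fin 3) (Fin (4 * n - 3)) ℝ)
    (W : Matrix (Fin (4 * n - 3)) (Fin 3) ℝ)
    (D : Matrix (Fin (4 * n - 3)) (Fin (4 * n - 3)) ℝ)
    (hent : ∀ i j, Matrix.fromBlocks U V W D i j = 1 ∨ Matrix.fromBlocks U V W D i j = -1)
    (hH : Matrix.fromBlocks U V W D * (Matrix.fromBlocks U V W D)ᵀ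
            = (4 * (n : ℝ)) • 1)
    (hU : U ^ 3 = U ^ 2 + (4 : ℝ) • U - (4 : ℝ) • (1 : Matrix (Fin 3) (Fin 3) ℝ)) :
    (let s := Real.sqrt (4 * (n : ℝ));
     let Δ₁ := 4 * (n : ℝ) * s - 4 * (n : ℝ) - 4 * s + 4;
     let Δ₂ := 4 * (n : ℝ) * s + 4 * (n : ℝ) - 4 * s - 4;
     let Y₁ := s⁻¹ • (D - ((4 * (n : ℝ) + s - 4) / Δ₂) • (W * V)
        + ((s + 1) / Δ₂) • (W * U * V) - (1 / Δ₂) • (W * U ^ 2 * V));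
     let Y₂ := s⁻¹ • (D + ((4 * (n : ℝ) - s - 4) / Δ₁) • (W * V)
        + ((s - 1) / Δ₁) • (W * U * V) + (1 / Δ₁) • (W * U ^ 2 * V));
     Y₁ * Y₁ᵀ = 1 ∧ Y₂ * Y₂ᵀ = 1) :=
  stmt_13_general n hn U V W D hH hU
end

section
/- For every natural n ≥ 1, the real number (√(4n−1)/√(4n)) · ((√(4n) + 2)/(√(4n) + 1)) − 1 is strictly less than 1/(2√n). -/
/-! With `s = √(4n) = 2√n`, the first factor `√(4n-1)/s` is at most `1`, and
`(s+2)/(s+1) - 1 = 1/(s+1) < 1/s`. -/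

lemma add_two_div_add_one_sub_one_lt_one_div {s : ℝ} (hs : 0 < s) :
    (s + 2) / (s + 1) - 1 < 1 / s := by
  rw [div_sub_one (by positivity), div_lt_div_iff₀ (by positivity) hs]
  linarith

lemma div_mul_add_two_div_add_one_sub_one_lt {a s : ℝ} (ha : 0 ≤ a) (has : a ≤ s) :
    a / s * ((s + 2) / (s + 1)) - 1 < 1 / s := by
  rcases (ha.trans has).eq_or_lt with rfl | hs
  · simp
  have hle_one : a / s ≤ 1 := div_le_one_of_le₀ has hs.le
  calc a / s * ((s + 2) / (s + 1)) - 1 ≤ (s + 2) / (s + 1) - 1 := by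
        gcongr
        exact mul_le_of_le_one_left (by positivity) hle_one
    _ < 1 / s := add_two_div_add_one_sub_one_lt_one_div hs

theorem stmt_14_general (n : ℕ) :
    Real.sqrt (4 * (n : ℝ) - 1) / Real.sqrt (4 * (n : ℝ)) *
        ((Real.sqrt (4 * (n : ℝ)) + 2) / (Real.sqrt (4 * (n : ℝ)) + 1)) - 1
      < 1 / (2 * Real.sqrt n) := by
  have hsqrt : Real.sqrt (4 * (n : ℝ)) = 2 * Real.sqrt n := by
    rw [Real.sqrt_mul' _ n.cast_nonneg, show (4 : ℝ) = 2 ^ 2 by norm_num,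
      Real.sqrt_sq zero_le_two]
  rw [← hsqrt]
  exact div_mul_add_two_div_add_one_sub_one_lt (Real.sqrt_nonneg _)
    (Real.sqrt_le_sqrt (by linarith))

theorem stmt_14 (n : ℕ) (hn : 1 ≤ n) :
    Real.sqrt (4 * (n : ℝ) - 1) / Real.sqrt (4 * (n : ℝ)) *
        ((Real.sqrt (4 * (n : ℝ)) + 2) / (Real.sqrt (4 * (n : ℝ)) + 1)) - 1
      < 1 / (2 * Real.sqrt n) :=
  stmt_14_general n
end

section
/- For every natural n ≥ 4, the real number (√(4n−3)/√(4n)) · ((4n√(4n) + 8n + 2√(4n) + 10)/(4n√(4n) − 4n − 4√(4n) + 4)) − 1 is strictly less than 4/√n. -/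
/-!
Substitute `x = √n ≥ 2`, so that `√(4n) = 2x`. Bounding `√(4x² - 3)` by the first two terms
`2x - 3/(4x)` of its expansion at infinity turns the claim into a polynomial inequality in `x`
whose difference of sides is `x (160x⁴ - 200x³ - 280x² + 140x + 30)`, positive for `x ≥ 2`.
-/

open Real

lemma sqrt_four_mul_sq_sub_three_le {x : ℝ} (hx : 1 ≤ x) :
    √(4 * x ^ 2 - 3) ≤ (8 * x ^ 2 - 3) / (4 * x) := by
  have h4x : 0 < 4 * x := by positivity
  refine Real.sqrt_le_iff.2 ⟨div_nonneg (by nlinarith) h4x.le, ?_⟩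
  rw [div_pow, le_div_iff₀ (by positivity)]
  nlinarith

lemma epsilon_bound_of_two_le {x : ℝ} (hx : 2 ≤ x) :
    √(4 * x ^ 2 - 3) / (2 * x) *
        ((4 * x ^ 2 * (2 * x) + 8 * x ^ 2 + 2 * (2 * x) + 10) /
          (4 * x ^ 2 * (2 * x) - 4 * x ^ 2 - 4 * (2 * x) + 4)) - 1 < 4 / x := by
  have hx0 : 0 < x := by linarith
  have hN : 0 < 4 * x ^ 2 * (2 * x) + 8 * x ^ 2 + 2 * (2 * x) + 10 := by positivity
  have hD : 0 < 4 * x ^ 2 * (2 * x) - 4 * x ^ 2 - 4 * (2 * x) + 4 := by nlinarith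
  calc √(4 * x ^ 2 - 3) / (2 * x) *
          ((4 * x ^ 2 * (2 * x) + 8 * x ^ 2 + 2 * (2 * x) + 10) /
            (4 * x ^ 2 * (2 * x) - 4 * x ^ 2 - 4 * (2 * x) + 4)) - 1
      ≤ (8 * x ^ 2 - 3) / (4 * x) / (2 * x) *
          ((4 * x ^ 2 * (2 * x) + 8 * x ^ 2 + 2 * (2 * x) + 10) /
            (4 * x ^ 2 * (2 * x) - 4 * x ^ 2 - 4 * (2 * x) + 4)) - 1 := by
        gcongr
        exact sqrt_four_mul_sq_sub_three_le (by linarith)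
    _ < 4 / x := by
        rw [sub_lt_iff_lt_add, div_add_one hx0.ne', div_div, div_mul_div_comm,
          div_lt_div_iff₀ (by positivity) hx0]
        nlinarith [mul_nonneg (sub_nonneg.2 hx) (sub_nonneg.2 hx),
          pow_le_pow_left₀ (by norm_num) hx 3]

theorem stmt_16 (n : ℕ) (hn : 4 ≤ n) :
    Real.sqrt (4 * (n : ℝ) - 3) / Real.sqrt (4 * (n : ℝ)) *
        ((4 * (n : ℝ) * Real.sqrt (4 * (n : ℝ)) + 8 * (n : ℝ) +
            2 * Real.sqrt (4 * (n : ℝ)) + 10) /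
          (4 * (n : ℝ) * Real.sqrt (4 * (n : ℝ)) - 4 * (n : ℝ) -
            4 * Real.sqrt (4 * (n : ℝ)) + 4)) - 1
      < 4 / Real.sqrt n := by
  have two_sq_le : (2 : ℝ) ^ 2 ≤ n := by exact_mod_cast hn
  have hsq : (n : ℝ) = √n ^ 2 := (Real.sq_sqrt n.cast_nonneg).symm
  have h4n : √(4 * (n : ℝ)) = 2 * √n := by
    rw [Real.sqrt_mul' _ n.cast_nonneg, show (4 : ℝ) = 2 ^ 2 by norm_num,
      Real.sqrt_sq zero_le_two]
  have bound := epsilon_bound_of_two_le (Real.le_sqrt_of_sq_le two_sq_le)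
  rwa [← hsq, ← h4n] at bound
end

section
/- Let s be a prime power and k a natural with 1 ≤ k < s, and set d = k·s. Then there exists a resolvable block design on a point set X of size d having s parallel classes, each parallel class consisting of s pairwise disjoint blocks of size k whose union is X, such that any two blocks taken from two different parallel classes intersect in at most one point. -/
/-!
Take a finite field `F` with `s` elements and `k` distinct elements `a 0, …, a (k-1)` of `F`.
On the point set `Fin k × F`, the lines `y = l * a x + i` of slope `l` form, for each `l`, a
parallel class of `s` blocks of size `k`. Two lines of different slopes meet in at most one point,
since `(l - m) * a x = j - i` determines `a x` and hence `x`.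
-/

open Finset

structure IsResolvablePacking {κ ι α : Type*} [Fintype ι] [Fintype α] [DecidableEq α]
    (P : κ → ι → Finset α) (k : ℕ) : Prop where
  disjoint : ∀ l, ∀ i j : ι, i ≠ j → Disjoint (P l i) (P l j)
  card_eq : ∀ l i, (P l i).card = k
  biUnion_eq_univ : ∀ l, univ.biUnion (P l) = univ
  card_inter_le_one : ∀ l m i j, l ≠ m → (P l i ∩ P m j).card ≤ 1

namespace IsResolvablePacking

variable {κ κ' ι ι' α β : Type*} [Fintype ι] [Fintype ι'] [Fintype α] [Fintype β]
  [DecidableEq α] [DecidableEq β] {P : κ → ι → Finset α} {k : ℕ}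

theorem map_equiv (h : IsResolvablePacking P k) (eκ : κ' ≃ κ) (eι : ι' ≃ ι) (e : α ≃ β) :
    IsResolvablePacking (fun l i => (P (eκ l) (eι i)).map e.toEmbedding) k where
  disjoint l i j hij := by
    rw [disjoint_map]
    exact h.disjoint _ _ _ (eι.injective.ne hij)
  card_eq l i := by rw [card_map, h.card_eq]
  biUnion_eq_univ l := by
    refine eq_univ_iff_forall.mpr fun b => ?_
    obtain ⟨i, -, hi⟩ := mem_biUnion.mp ((h.biUnion_eq_univ (eκ l)).symm ▸ mem_univ (e.symm b))
    exact mem_biUnion.mpr ⟨eι.symm i, mem_univ _, mem_map_equiv.mpr (by simpa using hi)⟩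
  card_inter_le_one l m i j hlm := by
    rw [← map_inter, card_map]
    exact h.card_inter_le_one _ _ _ _ (eκ.injective.ne hlm)

end IsResolvablePacking

section AffineLines

variable {ι F : Type*} [Ring F]

def affineLine [Fintype ι] (a : ι → F) (l i : F) : Finset (ι × F) :=
  univ.map ⟨fun x => (x, l * a x + i), fun _ _ h => (Prod.mk.inj h).1⟩

variable [Fintype ι] (a : ι → F)

theorem mem_affineLine {l i : F} {p : ι × F} : p ∈ affineLine a l i ↔ p.2 = l * a p.1 + i := by
  simp only [affineLine, mem_map, mem_univ, true_and]
  constructor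
  · rintro ⟨x, rfl⟩
    rfl
  · intro hp
    exact ⟨p.1, Prod.ext rfl hp.symm⟩

theorem card_affineLine (l i : F) : (affineLine a l i).card = Fintype.card ι := by
  rw [affineLine, card_map, card_univ]

theorem disjoint_affineLine (l : F) {i j : F} (hij : i ≠ j) :
    Disjoint (affineLine a l i) (affineLine a l j) := by
  refine disjoint_left.mpr fun p hi hj => hij ?_
  rw [mem_affineLine] at hi hj
  exact add_left_cancel (hi.symm.trans hj)

theorem mem_affineLine_sub (l : F) (p : ι × F) : p ∈ affineLine a l (p.2 - l * a p.1) := by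
  rw [mem_affineLine, add_sub_cancel]

variable [DecidableEq ι] [DecidableEq F]

theorem card_inter_affineLine_le_one [NoZeroDivisors F] (ha : Function.Injective a)
    {l m : F} (hlm : l ≠ m) (i j : F) : (affineLine a l i ∩ affineLine a m j).card ≤ 1 := by
  refine card_le_one.mpr fun p hp q hq => ?_
  simp only [mem_inter, mem_affineLine] at hp hq
  have slope {r : ι × F} (hl : r.2 = l * a r.1 + i) (hm : r.2 = m * a r.1 + j) :
      (l - m) * a r.1 = j - i := by
    rw [sub_mul, sub_eq_sub_iff_add_eq_add, ← hl, hm, add_comm]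
  have hx : a p.1 = a q.1 :=
    mul_left_cancel₀ (sub_ne_zero.mpr hlm) ((slope hp.1 hp.2).trans (slope hq.1 hq.2).symm)
  have h1 : p.1 = q.1 := ha hx
  exact Prod.ext h1 (by rw [hp.1, hq.1, h1])

variable [Fintype F]

theorem isResolvablePacking_affineLine [NoZeroDivisors F] (ha : Function.Injective a) :
    IsResolvablePacking (affineLine a) (Fintype.card ι) where
  disjoint l _ _ := disjoint_affineLine a l
  card_eq := card_affineLine a
  biUnion_eq_univ l := eq_univ_iff_forall.mpr fun p =>
    mem_biUnion.mpr ⟨_, mem_univ _, mem_affineLine_sub a l p⟩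
  card_inter_le_one _ _ i j hlm := card_inter_affineLine_le_one a ha hlm i j

end AffineLines

theorem exists_finiteField_card_eq {s : ℕ} (hs : IsPrimePow s) :
    ∃ (F : Type) (_ : Field F) (_ : Fintype F), Fintype.card F = s := by
  obtain ⟨p, n, hp, hn, rfl⟩ := hs
  have : Fact p.Prime := ⟨hp.nat_prime⟩
  have := Fintype.ofFinite (GaloisField p n)
  exact ⟨GaloisField p n, inferInstance, inferInstance, by
    rw [← Nat.card_eq_fintype_card, GaloisField.card p n hn.ne']⟩

theorem stmt_18_general (k s : ℕ) (hks : k < s) (hs : IsPrimePow s) :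
    ∃ P : Fin s → Fin s → Finset (Fin (k * s)),
      (∀ l, ∀ i j : Fin s, i ≠ j → Disjoint (P l i) (P l j)) ∧
      (∀ l i, (P l i).card = k) ∧
      (∀ l, Finset.univ.biUnion (P l) = (Finset.univ : Finset (Fin (k * s)))) ∧
      (∀ l m i j, l ≠ m → (P l i ∩ P m j).card ≤ 1) := by
  classical
  obtain ⟨F, _, _, hF⟩ := exists_finiteField_card_eq hs
  obtain ⟨a⟩ : Nonempty (Fin k ↪ F) :=
    Function.Embedding.nonempty_of_card_le (by rw [hF, Fintype.card_fin]; exact hks.le)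
  let eF : Fin s ≃ F := (Fintype.equivFinOfCardEq hF).symm
  let ePoints : Fin k × F ≃ Fin (k * s) :=
    (Equiv.prodCongr (Equiv.refl _) eF.symm).trans finProdFinEquiv
  have h := (isResolvablePacking_affineLine a a.injective).map_equiv eF eF ePoints
  rw [Fintype.card_fin] at h
  exact ⟨_, h.disjoint, h.card_eq, h.biUnion_eq_univ, h.card_inter_le_one⟩

theorem stmt_18 (k s : ℕ) (hk : 1 ≤ k) (hks : k < s) (hs : IsPrimePow s) :
    ∃ P : Fin s → Fin s → Finset (Fin (k * s)),
      (∀ l, ∀ i j : Fin s, i ≠ j → Disjoint (P l i) (P l j)) ∧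
      (∀ l i, (P l i).card = k) ∧
      (∀ l, Finset.univ.biUnion (P l) = (Finset.univ : Finset (Fin (k * s)))) ∧
      (∀ l m i j, l ≠ m → (P l i ∩ P m j).card ≤ 1) :=
  stmt_18_general k s hks hs
end
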